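/- arXiv:1609.07789 — 7 statements merged into one kernel-verified Lean document; each statement's English description precedes it below -/
import Mathlib

section
/- For any graph H of order n (with vertices v_1,…,v_n), the total domination polynomial of H(3) is D_t(H(3), x) = x^{2n}(x+2)^n. -/
open Polynomial Finset

/-- `D` is a total dominating set of `G`: every vertex has a neighbor in `D`. -/
def isTDS {V : Type*} (G : SimpleGraph V) (D : Finset V) : Prop :=
  ∀ v : V, ∃ u ∈ D, G.Adj v u

/-- The total domination polynomial of `G` (with integer coefficients). -/
noncomputable def tdPoly {V : Type*} [Finite V] (G : SimpleGraph V) : Polynomial ℤ :=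
  letI := Fintype.ofFinite V
  letI : DecidablePred (isTDS G) := Classical.decPred _
  ∑ D ∈ Finset.univ.filter (isTDS G), X ^ D.card

/-- `tdCount G i` is the number of total dominating sets of `G` of cardinality `i`. -/
noncomputable def tdCount {V : Type*} [Finite V] (G : SimpleGraph V) (i : ℕ) : ℕ :=
  letI := Fintype.ofFinite V
  letI : DecidablePred (fun D : Finset V => D.card = i ∧ isTDS G D) := Classical.decPred _
  (Finset.univ.filter (fun D : Finset V => D.card = i ∧ isTDS G D)).card

/-- The total domination number of `G`. -/
noncomputable def tdNum {V : Type*} (G : SimpleGraph V) : ℕ :=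
  sInf {k | ∃ D : Finset V, D.card = k ∧ isTDS G D}

/-- `attachP3 H` : to every vertex of `H` a path `P₃` is attached, identified at an end vertex.
The first summand is the vertex set of `H`. -/
def attachP3 {V : Type*} (H : SimpleGraph V) : SimpleGraph (V ⊕ V ⊕ V) :=
  SimpleGraph.fromRel (fun a b =>
    (∃ u v, a = .inl u ∧ b = .inl v ∧ H.Adj u v) ∨
    (∃ v, a = .inl v ∧ b = .inr (.inl v)) ∨
    (∃ v, a = .inr (.inl v) ∧ b = .inr (.inr v)))

lemma tdPoly_eq {V : Type*} [Fintype V] (G : SimpleGraph V) [DecidablePred (isTDS G)] :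
    tdPoly G = ∑ D ∈ Finset.univ.filter (isTDS G), X ^ D.card := by
  unfold tdPoly
  congr!

lemma isTDS_attachP3 {V : Type*} (H : SimpleGraph V) (D : Finset (V ⊕ V ⊕ V)) :
    isTDS (attachP3 H) D ↔
      (∀ v, Sum.inr (Sum.inl v) ∈ D) ∧
        ∀ v, Sum.inl v ∈ D ∨ Sum.inr (Sum.inr v) ∈ D := by
  constructor
  · intro h
    constructor
    · intro v
      obtain ⟨u, hu, hadj⟩ := h (Sum.inr (Sum.inr v))
      have : u = Sum.inr (Sum.inl v) := by
        rw [attachP3, SimpleGraph.fromRel_adj] at hadj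
        obtain ⟨-, h | h⟩ := hadj <;>
          rcases h with ⟨a, b, h1, h2, h3⟩ | ⟨a, h1, h2⟩ | ⟨a, h1, h2⟩ <;> simp_all
      rwa [this] at hu
    · intro v
      obtain ⟨u, hu, hadj⟩ := h (Sum.inr (Sum.inl v))
      have : u = Sum.inl v ∨ u = Sum.inr (Sum.inr v) := by
        rw [attachP3, SimpleGraph.fromRel_adj] at hadj
        obtain ⟨-, h | h⟩ := hadj <;>
          rcases h with ⟨a, b, h1, h2, h3⟩ | ⟨a, h1, h2⟩ | ⟨a, h1, h2⟩ <;> simp_all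
      rcases this with h | h <;> [left; right] <;> rwa [h] at hu
  · rintro ⟨h1, h2⟩ v
    have adj1 : ∀ w : V, (attachP3 H).Adj (Sum.inl w) (Sum.inr (Sum.inl w)) := by
      intro w
      rw [attachP3, SimpleGraph.fromRel_adj]
      exact ⟨by simp, Or.inl (Or.inr (Or.inl ⟨w, rfl, rfl⟩))⟩
    have adj2 : ∀ w : V, (attachP3 H).Adj (Sum.inr (Sum.inl w)) (Sum.inr (Sum.inr w)) := by
      intro w
      rw [attachP3, SimpleGraph.fromRel_adj]
      exact ⟨by simp, Or.inl (Or.inr (Or.inr ⟨w, rfl, rfl⟩))⟩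
    match v with
    | Sum.inl v => exact ⟨Sum.inr (Sum.inl v), h1 v, adj1 v⟩
    | Sum.inr (Sum.inl v) =>
      rcases h2 v with h | h
      · exact ⟨Sum.inl v, h, ((adj1 v).symm)⟩
      · exact ⟨Sum.inr (Sum.inr v), h, adj2 v⟩
    | Sum.inr (Sum.inr v) => exact ⟨Sum.inr (Sum.inl v), h1 v, (adj2 v).symm⟩

def wgt : Fin 3 → ℕ
  | 0 => 3
  | 1 => 2
  | 2 => 2

theorem tdPoly_attachP3 {V : Type*} [Fintype V] (H : SimpleGraph V) (n : ℕ)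
    (hn : Fintype.card V = n) :
    tdPoly (attachP3 H) = X ^ (2 * n) * (X + 2) ^ n := by
  subst hn
  classical
  rw [tdPoly_eq]
  have key : (∑ D ∈ Finset.univ.filter (isTDS (attachP3 H)), (X : ℤ[X]) ^ D.card)
      = ∑ g ∈ Fintype.piFinset (fun _ : V => (Finset.univ : Finset (Fin 3))),
          ∏ v : V, (X : ℤ[X]) ^ wgt (g v) := by
    refine (Finset.sum_nbij'
      (i := fun D => fun v : V =>
        if Sum.inl v ∈ D then (if Sum.inr (Sum.inr v) ∈ D then (0 : Fin 3) else 1) else 2)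
      (j := fun g => Finset.univ.filter (fun x : V ⊕ V ⊕ V =>
        Sum.rec (fun v => g v ≠ 2) (Sum.rec (fun _ => True) (fun v => g v ≠ 1)) x))
      ?_ ?_ ?_ ?_ ?_)
    · intro D hD
      simp [Fintype.mem_piFinset]
    · intro g hg
      rw [Finset.mem_filter]
      refine ⟨Finset.mem_univ _, (isTDS_attachP3 H _).mpr ⟨fun v => by simp, fun v => ?_⟩⟩
      have h3 : ∀ c : Fin 3, c ≠ 2 ∨ c ≠ 1 := by decide
      rcases h3 (g v) with h | h
      · left; simp [h]
      · right; simp [h]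
    · intro D hD
      rw [Finset.mem_filter] at hD
      obtain ⟨h1, h2⟩ := (isTDS_attachP3 H D).mp hD.2
      ext x
      match x with
      | Sum.inl v =>
        by_cases hv : Sum.inl v ∈ D <;> by_cases hw : Sum.inr (Sum.inr v) ∈ D <;>
          simp [hv, hw]
      | Sum.inr (Sum.inl v) => simp [h1 v]
      | Sum.inr (Sum.inr v) =>
        have h2v := h2 v
        by_cases hv : Sum.inl v ∈ D <;> by_cases hw : Sum.inr (Sum.inr v) ∈ D <;>
          simp_all
    · intro g hg
      funext v
      obtain ⟨k, hk⟩ : ∃ k : Fin 3, g v = k := ⟨_, rfl⟩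
      fin_cases k <;> simp [hk]
    · intro D hD
      rw [Finset.mem_filter] at hD
      obtain ⟨h1, h2⟩ := (isTDS_attachP3 H D).mp hD.2
      have hcard : D.card = ∑ v : V, wgt
          (if Sum.inl v ∈ D then (if Sum.inr (Sum.inr v) ∈ D then (0 : Fin 3) else 1) else 2) := by
        have ecard : D.card = ∑ x : V ⊕ V ⊕ V, if x ∈ D then 1 else 0 :=
          calc D.card = (Finset.univ.filter (· ∈ D)).card := by simp
            _ = ∑ x : V ⊕ V ⊕ V, if x ∈ D then 1 else 0 := Finset.card_filter _ _
        rw [ecard, Fintype.sum_sum_type]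
        rw [Fintype.sum_sum_type]
        rw [← Finset.sum_add_distrib, ← Finset.sum_add_distrib]
        refine Finset.sum_congr rfl fun v _ => ?_
        by_cases hv : Sum.inl v ∈ D
        · by_cases hw : Sum.inr (Sum.inr v) ∈ D
          · simp [hv, hw, h1 v, wgt]
          · simp [hv, hw, h1 v, wgt]
        · by_cases hw : Sum.inr (Sum.inr v) ∈ D
          · simp [hv, hw, h1 v, wgt]
          · exact absurd (h2 v) (by simp [hv, hw])
      rw [hcard, Finset.prod_pow_eq_pow_sum]
  have hps : (∑ g ∈ Fintype.piFinset (fun _ : V => (Finset.univ : Finset (Fin 3))),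
      ∏ v : V, (X : ℤ[X]) ^ wgt (g v))
      = ∏ _v : V, ∑ j : Fin 3, (X : ℤ[X]) ^ wgt j :=
    (Finset.prod_univ_sum _ fun _ j => X ^ wgt j).symm
  rw [key, hps]
  have h3 : (∑ j : Fin 3, (X : ℤ[X]) ^ wgt j) = X ^ 2 * (X + 2) := by
    rw [Fin.sum_univ_three]
    show (X : ℤ[X]) ^ 3 + X ^ 2 + X ^ 2 = _
    ring
  rw [h3, Finset.prod_const, Finset.card_univ, mul_pow, ← pow_mul]
end

section
/- For any n ≥ 1, the total domination number of the generalized friendship graph F_{n,4} equals n + 1. -/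
open Polynomial Finset

/-- The generalized friendship graph `F_{n,4}` : `n` cycles of length 4 meeting at a common
vertex `none`; the `i`-th square is `none — (i,0) — (i,1) — (i,2) — none`. -/
def friendship4 (n : ℕ) : SimpleGraph (Option (Fin n × Fin 3)) :=
  SimpleGraph.fromRel (fun a b =>
    (∃ i, a = none ∧ b = some (i, (0 : Fin 3))) ∨
    (∃ i, a = some (i, (0 : Fin 3)) ∧ b = some (i, (1 : Fin 3))) ∨
    (∃ i, a = some (i, (1 : Fin 3)) ∧ b = some (i, (2 : Fin 3))) ∨
    (∃ i, a = some (i, (2 : Fin 3)) ∧ b = none))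


lemma neighbor_of_mid {n : ℕ} {i : Fin n} {u : Option (Fin n × Fin 3)}
    (h : (friendship4 n).Adj (some (i,1)) u) : u = some (i,0) ∨ u = some (i,2) := by
  simp only [friendship4, SimpleGraph.fromRel_adj] at h
  obtain ⟨hne, h | h⟩ := h <;>
    rcases h with (⟨j,h1,h2⟩|⟨j,h1,h2⟩|⟨j,h1,h2⟩|⟨j,h1,h2⟩) <;> simp_all

lemma neighbor_of_zero {n : ℕ} {i : Fin n} {u : Option (Fin n × Fin 3)}
    (h : (friendship4 n).Adj (some (i,0)) u) : u = none ∨ u = some (i,1) := by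
  simp only [friendship4, SimpleGraph.fromRel_adj] at h
  obtain ⟨hne, h | h⟩ := h <;>
    rcases h with (⟨j,h1,h2⟩|⟨j,h1,h2⟩|⟨j,h1,h2⟩|⟨j,h1,h2⟩) <;> simp_all

theorem tdNum_friendship4 (n : ℕ) (hn : 1 ≤ n) :
    tdNum (friendship4 n) = n + 1 := by
  classical
  set i0 : Fin n := ⟨0, hn⟩ with hi0
  -- the witness set
  set D : Finset (Option (Fin n × Fin 3)) :=
    insert none ((univ : Finset (Fin n)).image fun i => (some (i, 0) : Option (Fin n × Fin 3)))
    with hDdef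
  have hinj0 : Function.Injective (fun i : Fin n => (some (i, (0:Fin 3)) : Option (Fin n × Fin 3))) := by
    intro a b hab; simpa using hab
  have hcard : D.card = n + 1 := by
    rw [hDdef, card_insert_of_notMem (by simp), card_image_of_injective _ hinj0,
      card_univ, Fintype.card_fin]
  have hmemD : ∀ i : Fin n, (some (i,0) : Option (Fin n × Fin 3)) ∈ D := by
    intro i; exact mem_insert_of_mem (mem_image.2 ⟨i, mem_univ _, rfl⟩)
  have hTDS : isTDS (friendship4 n) D := by
    rintro (_ | ⟨i, x⟩)
    · refine ⟨some (i0, 0), hmemD i0, ?_⟩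
      exact ⟨by simp, Or.inl (Or.inl ⟨i0, rfl, rfl⟩)⟩
    · fin_cases x
      · refine ⟨none, mem_insert_self _ _, ?_⟩
        exact ⟨by simp, Or.inr (Or.inl ⟨i, rfl, rfl⟩)⟩
      · refine ⟨some (i, 0), hmemD i, ?_⟩
        exact ⟨by simp, Or.inr (Or.inr (Or.inl ⟨i, rfl, rfl⟩))⟩
      · refine ⟨none, mem_insert_self _ _, ?_⟩
        exact ⟨by simp, Or.inl (Or.inr (Or.inr (Or.inr ⟨i, rfl, rfl⟩)))⟩
  have hlb : ∀ k ∈ {k | ∃ E : Finset (Option (Fin n × Fin 3)), E.card = k ∧ isTDS (friendship4 n) E},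
      n + 1 ≤ k := by
    rintro k ⟨E, rfl, hE⟩
    have hc : ∀ i : Fin n, ∃ u, u ∈ E ∧ (u = some (i,0) ∨ u = some (i,2)) := by
      intro i
      obtain ⟨u, hu, ha⟩ := hE (some (i,1))
      exact ⟨u, hu, neighbor_of_mid ha⟩
    choose c hc1 hc2 using hc
    obtain ⟨w, hw, hwa⟩ := hE (some (i0, 0))
    have hw2 := neighbor_of_zero hwa
    have hinj : Function.Injective c := by
      intro i j hij
      rcases hc2 i with h1 | h1 <;> rcases hc2 j with h2 | h2 <;>
        rw [h1, h2] at hij <;> simp_all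
    have hwno : w ∉ (univ : Finset (Fin n)).image c := by
      intro hmem
      obtain ⟨i, _, heq⟩ := mem_image.1 hmem
      rcases hc2 i with h1 | h1 <;> rcases hw2 with h2 | h2 <;> simp_all
    have hsub : insert w ((univ : Finset (Fin n)).image c) ⊆ E := by
      intro x hx
      rcases mem_insert.1 hx with rfl | hx
      · exact hw
      · obtain ⟨i, _, rfl⟩ := mem_image.1 hx; exact hc1 i
    calc n + 1 = (insert w ((univ : Finset (Fin n)).image c)).card := by
          rw [card_insert_of_notMem hwno, card_image_of_injective _ hinj,
            card_univ, Fintype.card_fin]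
      _ ≤ E.card := card_le_card hsub
  refine le_antisymm (Nat.sInf_le ⟨D, hcard, hTDS⟩) (le_csInf ⟨n+1, D, hcard, hTDS⟩ hlb)
end

section
/- Edge deletion formula for twin vertices: if e = {u,v} is an edge of a finite simple graph G with N[u] = N[v] (closed neighborhoods equal), then D_t(G, x) = D_t(G∖e, x) + x^2 · D_t(G ∖ N[u], x). -/
open Polynomial Finset

/-!
Every total dominating set of `G ∖ uv` is one of `G`. A total dominating set `D` of `G` that is
not one of `G ∖ uv` leaves `u` (or `v`) with no neighbor in `D` other than its twin; as `u` and `v`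
are twins this forces `D ∩ N[u] = {u, v}`. No vertex outside `N[u]` sees `u` or `v`, so the rest
of `D` is exactly a total dominating set of `G ∖ N[u]`, and conversely `{u, v} ∪ D'` is such a set
for every total dominating set `D'` of `G ∖ N[u]`: these sets contribute `x² · D_t(G ∖ N[u], x)`.
-/

section PairExtension

variable {V : Type*} [DecidableEq V] {S : Set V} [DecidablePred (· ∈ S)] {u v : V}

def insertPair (u v : V) (S : Set V) (D' : Finset S) : Finset V :=
  insert u (insert v (D'.map (Function.Embedding.subtype (· ∈ S))))

omit [DecidableEq V] [DecidablePred (· ∈ S)] in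
lemma mem_map_subtype_iff {D' : Finset S} {x : V} :
    x ∈ D'.map (Function.Embedding.subtype (· ∈ S)) ↔ ∃ hx : x ∈ S, ⟨x, hx⟩ ∈ D' := by
  simp

lemma subtype_insertPair (hu : u ∉ S) (hv : v ∉ S) (D' : Finset S) :
    (insertPair u v S D').subtype (· ∈ S) = D' := by
  ext ⟨x, hx⟩
  have hxu : x ≠ u := by rintro rfl; exact hu hx
  have hxv : x ≠ v := by rintro rfl; exact hv hx
  simp only [insertPair, mem_subtype, mem_insert, hxu, hxv, mem_map_subtype_iff, false_or]
  exact ⟨fun ⟨_, h⟩ => h, fun h => ⟨hx, h⟩⟩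

lemma insertPair_injective (hu : u ∉ S) (hv : v ∉ S) : Function.Injective (insertPair u v S) :=
  fun D₁ D₂ h => by rw [← subtype_insertPair hu hv D₁, h, subtype_insertPair hu hv]

lemma insertPair_subtype {D : Finset V} (hu : u ∈ D) (hv : v ∈ D)
    (hD : ∀ x ∈ D, x ∉ S → x = u ∨ x = v) :
    insertPair u v S (D.subtype (· ∈ S)) = D := by
  rw [insertPair, subtype_map]
  ext x
  simp only [mem_insert, mem_filter]
  by_cases hx : x ∈ S
  · constructor
    · rintro (rfl | rfl | ⟨hxD, -⟩) <;> assumption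
    · exact fun hxD => Or.inr (Or.inr ⟨hxD, hx⟩)
  · constructor
    · rintro (rfl | rfl | ⟨-, hxS⟩)
      exacts [hu, hv, absurd hxS hx]
    · exact fun hxD => (hD x hxD hx).imp_right Or.inl

omit [DecidablePred (· ∈ S)] in
lemma card_insertPair (huv : u ≠ v) (hu : u ∉ S) (hv : v ∉ S) (D' : Finset S) :
    (insertPair u v S D').card = D'.card + 2 := by
  have hv' : v ∉ D'.map (Function.Embedding.subtype (· ∈ S)) := by
    rw [mem_map_subtype_iff]; exact fun ⟨hvS, _⟩ => hv hvS
  have hu' : u ∉ insert v (D'.map (Function.Embedding.subtype (· ∈ S))) := by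
    rw [mem_insert, mem_map_subtype_iff]
    rintro (h | ⟨huS, _⟩)
    exacts [huv h, hu huS]
  rw [insertPair, card_insert_of_notMem hu', card_insert_of_notMem hv', card_map]

end PairExtension

section TotalDomination

variable {V : Type*} {G : SimpleGraph V}

lemma tdPoly_eq_sum [Fintype V] (G : SimpleGraph V) [DecidablePred (isTDS G)] :
    tdPoly G = ∑ D ∈ univ.filter (isTDS G), X ^ D.card := by
  rw [tdPoly]
  congr!

lemma isTDS.mono {G' : SimpleGraph V} {D : Finset V} (hle : G' ≤ G) (hD : isTDS G' D) :
    isTDS G D := fun w =>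
  let ⟨x, hx, hwx⟩ := hD w
  ⟨x, hx, hle hwx⟩

lemma isTDS_deleteEdges_iff {D : Finset V} (hD : isTDS G D) (u v : V) :
    isTDS (G.deleteEdges {s(u, v)}) D ↔
      (∃ x ∈ D, G.Adj u x ∧ x ≠ v) ∧ ∃ x ∈ D, G.Adj v x ∧ x ≠ u := by
  simp only [isTDS, SimpleGraph.deleteEdges_adj, Set.mem_singleton_iff]
  constructor
  · intro h
    obtain ⟨x, hx, hux, hne⟩ := h u
    obtain ⟨y, hy, hvy, hne'⟩ := h v
    refine ⟨⟨x, hx, hux, ?_⟩, ⟨y, hy, hvy, ?_⟩⟩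
    · rintro rfl; exact hne rfl
    · rintro rfl; exact hne' Sym2.eq_swap
  · rintro ⟨⟨x, hx, hux, hxv⟩, ⟨y, hy, hvy, hyu⟩⟩ w
    by_cases hwu : w = u
    · subst hwu
      exact ⟨x, hx, hux, fun h => hxv (Sym2.congr_right.mp h)⟩
    by_cases hwv : w = v
    · subst hwv
      exact ⟨y, hy, hvy, fun h => hyu (Sym2.congr_right.mp (h.trans Sym2.eq_swap))⟩
    obtain ⟨z, hz, hwz⟩ := hD w
    refine ⟨z, hz, hwz, fun h => ?_⟩
    rcases Sym2.mem_iff.mp (h ▸ Sym2.mem_mk_left w z) with rfl | rfl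
    exacts [hwu rfl, hwv rfl]

lemma isTDS_induce_subtype_iff {S : Set V} [DecidablePred (· ∈ S)] {D : Finset V}
    (hD : ∀ x ∈ D, x ∉ S → ∀ w ∈ S, ¬ G.Adj w x) :
    isTDS (G.induce S) (D.subtype (· ∈ S)) ↔ ∀ w ∈ S, ∃ x ∈ D, G.Adj w x := by
  constructor
  · intro h w hw
    obtain ⟨x, hx, hwx⟩ := h ⟨w, hw⟩
    exact ⟨x, mem_subtype.mp hx, hwx⟩
  · intro h w
    obtain ⟨x, hx, hwx⟩ := h w w.2
    have hxS : x ∈ S := by_contra fun hxS => hD x hx hxS w w.2 hwx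
    exact ⟨⟨x, hxS⟩, mem_subtype.mpr hx, hwx⟩

end TotalDomination

section Twins

variable {V : Type*} {G : SimpleGraph V} {u v : V}

lemma adj_of_adj_of_neighborSet_union_eq (hN : G.neighborSet u ∪ {u} = G.neighborSet v ∪ {v})
    {x : V} (hux : G.Adj u x) (hxv : x ≠ v) : G.Adj v x := by
  have hx : x ∈ G.neighborSet v ∪ {v} := hN ▸ Or.inl hux
  exact hx.resolve_right hxv

lemma forall_adj_imp_eq_swap (hN : G.neighborSet u ∪ {u} = G.neighborSet v ∪ {v})
    {D : Finset V} (hD : ∀ x ∈ D, G.Adj u x → x = v) : ∀ x ∈ D, G.Adj v x → x = u := by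
  intro x hx hvx
  by_contra hxu
  have hvv : G.Adj v v := hD x hx (adj_of_adj_of_neighborSet_union_eq hN.symm hvx hxu) ▸ hvx
  exact G.loopless.irrefl v hvv

lemma isTDS_and_not_isTDS_deleteEdges_iff [DecidablePred (· ∈ (G.neighborSet u ∪ {u})ᶜ)]
    (huv : G.Adj u v) (hN : G.neighborSet u ∪ {u} = G.neighborSet v ∪ {v}) (D : Finset V) :
    isTDS G D ∧ ¬ isTDS (G.deleteEdges {s(u, v)}) D ↔
      u ∈ D ∧ v ∈ D ∧ (∀ x ∈ D, G.Adj u x → x = v) ∧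
        isTDS (G.induce (G.neighborSet u ∪ {u})ᶜ) (D.subtype (· ∈ (G.neighborSet u ∪ {u})ᶜ)) := by
  have hS : ∀ {w}, w ∈ (G.neighborSet u ∪ {u})ᶜ ↔ ¬ G.Adj u w ∧ w ≠ u := by simp [and_comm]
  have hsep : (∀ x ∈ D, G.Adj u x → x = v) →
      ∀ x ∈ D, x ∉ (G.neighborSet u ∪ {u})ᶜ → ∀ w ∈ (G.neighborSet u ∪ {u})ᶜ, ¬ G.Adj w x := by
    intro huD x hx hxS w hw hwx
    rcases not_not.mp hxS with hux | rfl
    · obtain rfl := huD x hx hux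
      exact (hS.mp hw).1 (adj_of_adj_of_neighborSet_union_eq hN.symm hwx.symm (hS.mp hw).2)
    · exact (hS.mp hw).1 hwx.symm
  have hneg : ∀ {a b : V}, (¬ ∀ x ∈ D, G.Adj a x → x = b) ↔ ∃ x ∈ D, G.Adj a x ∧ x ≠ b := by
    simp
  constructor
  · rintro ⟨hD, hD'⟩
    have huD : ∀ x ∈ D, G.Adj u x → x = v := by
      by_contra hu
      exact hD' ((isTDS_deleteEdges_iff hD u v).mpr
        ⟨hneg.mp hu, hneg.mp (mt (forall_adj_imp_eq_swap hN.symm) hu)⟩)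
    obtain ⟨x, hx, hux⟩ := hD u
    obtain ⟨y, hy, hvy⟩ := hD v
    refine ⟨forall_adj_imp_eq_swap hN huD y hy hvy ▸ hy, huD x hx hux ▸ hx, huD, ?_⟩
    exact (isTDS_induce_subtype_iff (hsep huD)).mpr fun w _ => hD w
  · rintro ⟨hu, hv, huD, hDS⟩
    have hD : isTDS G D := by
      intro w
      by_cases hw : w ∈ (G.neighborSet u ∪ {u})ᶜ
      · exact (isTDS_induce_subtype_iff (hsep huD)).mp hDS w hw
      by_cases hwu : w = u
      · exact ⟨v, hv, hwu ▸ huv⟩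
      · exact ⟨u, hu, (not_not.mp fun h => hw (hS.mpr ⟨h, hwu⟩)).symm⟩
    refine ⟨hD, fun hD' => ?_⟩
    obtain ⟨x, hx, hux, hxv⟩ := ((isTDS_deleteEdges_iff hD u v).mp hD').1
    exact hxv (huD x hx hux)

lemma isTDS_and_not_isTDS_deleteEdges_iff_exists [DecidableEq V]
    [DecidablePred (· ∈ (G.neighborSet u ∪ {u})ᶜ)]
    (huv : G.Adj u v) (hN : G.neighborSet u ∪ {u} = G.neighborSet v ∪ {v}) (D : Finset V) :
    isTDS G D ∧ ¬ isTDS (G.deleteEdges {s(u, v)}) D ↔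
      ∃ D', isTDS (G.induce (G.neighborSet u ∪ {u})ᶜ) D' ∧ insertPair u v _ D' = D := by
  have hu : u ∉ (G.neighborSet u ∪ {u})ᶜ := by simp
  have hv : v ∉ (G.neighborSet u ∪ {u})ᶜ := by simp [huv]
  rw [isTDS_and_not_isTDS_deleteEdges_iff huv hN]
  constructor
  · rintro ⟨huD, hvD, hD, hDS⟩
    refine ⟨_, hDS, insertPair_subtype huD hvD fun x hx hxS => ?_⟩
    rcases not_not.mp hxS with hux | rfl
    exacts [Or.inr (hD x hx hux), Or.inl rfl]
  · rintro ⟨D', hD', rfl⟩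
    refine ⟨by simp [insertPair], by simp [insertPair], fun x hx hux => ?_,
      by rwa [subtype_insertPair hu hv]⟩
    rcases mem_insert.mp hx with rfl | hx
    · exact absurd hux (G.loopless.irrefl x)
    rcases mem_insert.mp hx with rfl | hx
    · rfl
    obtain ⟨hxS, -⟩ := mem_map_subtype_iff.mp hx
    exact absurd (Or.inl hux) hxS

end Twins

theorem tdPoly_deleteEdge_twin {V : Type*} [Finite V] (G : SimpleGraph V) (u v : V)
    (huv : G.Adj u v)
    (h : G.neighborSet u ∪ {u} = G.neighborSet v ∪ {v}) :
    tdPoly G = tdPoly (G.deleteEdges {s(u, v)}) +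
      X ^ 2 * tdPoly (G.induce ((G.neighborSet u ∪ {u})ᶜ)) := by
  classical
  cases nonempty_fintype V
  have hu : u ∉ (G.neighborSet u ∪ {u})ᶜ := by simp
  have hv : v ∉ (G.neighborSet u ∪ {u})ᶜ := by simp [huv]
  have hkept : univ.filter (fun D => isTDS G D ∧ isTDS (G.deleteEdges {s(u, v)}) D) =
      univ.filter (isTDS (G.deleteEdges {s(u, v)})) :=
    filter_congr fun D _ => and_iff_right_of_imp (isTDS.mono (G.deleteEdges_le _))
  have hlost : univ.filter (fun D => isTDS G D ∧ ¬ isTDS (G.deleteEdges {s(u, v)}) D) =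
      (univ.filter (isTDS (G.induce (G.neighborSet u ∪ {u})ᶜ))).image (insertPair u v _) := by
    ext D
    simp only [mem_filter, mem_univ, true_and, mem_image,
      isTDS_and_not_isTDS_deleteEdges_iff_exists huv h]
  rw [tdPoly_eq_sum G, tdPoly_eq_sum (G.deleteEdges _), tdPoly_eq_sum (G.induce _),
    ← sum_filter_add_sum_filter_not _ (isTDS (G.deleteEdges {s(u, v)})), filter_filter,
    filter_filter, hkept, hlost, sum_image (insertPair_injective hu hv).injOn, mul_sum]
  congr 1
  refine sum_congr rfl fun D' _ => ?_
  rw [card_insertPair huv.ne hu hv, pow_add, mul_comm]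
end

section
/- For n ≥ 3, the total domination number of the (connected) graph H(3) built from a connected graph H of order n equals 2n, which is two-thirds of its order 3n; i.e., γ_t(H(3)) = (2/3)|V(H(3))|. -/
open Polynomial Finset

theorem tdNum_attachP3 {V : Type*} [Fintype V] (H : SimpleGraph V) (n : ℕ)
    (hc : H.Connected) (hcard : Fintype.card V = n) (hn : 3 ≤ n) :
    tdNum (attachP3 H) = 2 * n := by
  classical
  subst hcard
  -- the witness set
  set D : Finset (V ⊕ V ⊕ V) :=
    (Finset.univ.image Sum.inl) ∪ (Finset.univ.image (fun v => Sum.inr (Sum.inl v))) with hD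
  have hmemD : ∀ v : V, Sum.inl v ∈ D ∧ Sum.inr (Sum.inl v) ∈ D := by
    intro v
    constructor
    · exact Finset.mem_union_left _ (Finset.mem_image_of_mem _ (Finset.mem_univ v))
    · exact Finset.mem_union_right _ (Finset.mem_image_of_mem _ (Finset.mem_univ v))
  have hAdj1 : ∀ v : V, (attachP3 H).Adj (Sum.inl v) (Sum.inr (Sum.inl v)) := by
    intro v
    simp [attachP3, SimpleGraph.fromRel_adj]
  have hAdj2 : ∀ v : V, (attachP3 H).Adj (Sum.inr (Sum.inr v)) (Sum.inr (Sum.inl v)) := by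
    intro v
    simp [attachP3, SimpleGraph.fromRel_adj]
  have hTDS : isTDS (attachP3 H) D := by
    intro w
    rcases w with v | v | v
    · exact ⟨_, (hmemD v).2, hAdj1 v⟩
    · exact ⟨_, (hmemD v).1, ((hAdj1 v).symm)⟩
    · exact ⟨_, (hmemD v).2, hAdj2 v⟩
  have hcardD : D.card = 2 * Fintype.card V := by
    rw [hD, Finset.card_union_of_disjoint, Finset.card_image_of_injective _ Sum.inl_injective,
      Finset.card_image_of_injective _ (fun a b h => by
        simpa using h)]
    · simp [Finset.card_univ]; ring
    · rw [Finset.disjoint_left]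
      rintro a ha hb
      simp only [Finset.mem_image] at ha hb
      obtain ⟨x, -, rfl⟩ := ha
      obtain ⟨y, -, h⟩ := hb
      exact Sum.inl_ne_inr h.symm
  have hmem : 2 * Fintype.card V ∈ {k | ∃ D : Finset (V ⊕ V ⊕ V), D.card = k ∧ isTDS (attachP3 H) D} :=
    ⟨D, hcardD, hTDS⟩
  -- lower bound
  have hlow : ∀ k ∈ {k | ∃ D : Finset (V ⊕ V ⊕ V), D.card = k ∧ isTDS (attachP3 H) D},
      2 * Fintype.card V ≤ k := by
    rintro k ⟨E, rfl, hE⟩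
    have hmid : ∀ v : V, Sum.inr (Sum.inl v) ∈ E := by
      intro v
      obtain ⟨u, hu, hadj⟩ := hE (Sum.inr (Sum.inr v))
      have : u = Sum.inr (Sum.inl v) := by
        rw [attachP3, SimpleGraph.fromRel_adj] at hadj
        obtain ⟨-, h | h⟩ := hadj <;> rcases h with h | h | h <;>
          simp_all
      rwa [this] at hu
    have hside : ∀ v : V, Sum.inl v ∈ E ∨ Sum.inr (Sum.inr v) ∈ E := by
      intro v
      obtain ⟨u, hu, hadj⟩ := hE (Sum.inr (Sum.inl v))
      have : u = Sum.inl v ∨ u = Sum.inr (Sum.inr v) := by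
        rw [attachP3, SimpleGraph.fromRel_adj] at hadj
        obtain ⟨-, h | h⟩ := hadj <;> rcases h with h | h | h <;>
          simp_all
      rcases this with rfl | rfl
      · exact Or.inl hu
      · exact Or.inr hu
    -- injection V ⊕ V → E
    set f : V ⊕ V → V ⊕ V ⊕ V := fun x =>
      match x with
      | Sum.inl v => Sum.inr (Sum.inl v)
      | Sum.inr v => if Sum.inl v ∈ E then Sum.inl v else Sum.inr (Sum.inr v)
    have hfmem : ∀ x : V ⊕ V, f x ∈ E := by
      rintro (v | v)
      · exact hmid v
      · by_cases h : Sum.inl v ∈ E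
        · simp [f, h]
        · have := (hside v).resolve_left h
          simpa [f, h] using this
    have hfinj : Function.Injective f := by
      rintro (a | a) (b | b) hab
      · simp [f] at hab; simp [hab]
      · simp only [f] at hab
        split at hab <;> simp_all
      · simp only [f] at hab
        split at hab <;> simp_all
      · simp only [f] at hab
        split at hab <;> split at hab <;> simp_all
    calc 2 * Fintype.card V = Fintype.card (V ⊕ V) := by simp; ring
      _ ≤ E.card := by
          rw [← Finset.card_univ]
          exact Finset.card_le_card_of_injOn f (fun x _ => hfmem x) hfinj.injOn
  exact le_antisymm (Nat.sInf_le hmem) (le_csInf ⟨_, hmem⟩ hlow)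
end

section
/- For the friendship-type graph F_{n,4} (n squares sharing one vertex), a minimum total dominating set is given by the common vertex together with one neighbor of the common vertex from each square; in particular any set of size at most n fails to be a total dominating set of F_{n,4}. -/
open Polynomial Finset

lemma adj1' (n : ℕ) (i : Fin n) (u : Option (Fin n × Fin 3)) :
    (friendship4 n).Adj (some (i, 1)) u → u = some (i, 0) ∨ u = some (i, 2) := by
  rintro ⟨hne, h | h⟩ <;>
    rcases h with ⟨j, h1, h2⟩ | ⟨j, h1, h2⟩ | ⟨j, h1, h2⟩ | ⟨j, h1, h2⟩ <;> simp_all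

lemma adj0' (n : ℕ) (i : Fin n) (u : Option (Fin n × Fin 3)) :
    (friendship4 n).Adj (some (i, 0)) u → u = none ∨ u = some (i, 1) := by
  rintro ⟨hne, h | h⟩ <;>
    rcases h with ⟨j, h1, h2⟩ | ⟨j, h1, h2⟩ | ⟨j, h1, h2⟩ | ⟨j, h1, h2⟩ <;> simp_all

lemma adj_none_zero (n : ℕ) (i : Fin n) :
    (friendship4 n).Adj none (some (i, 0)) :=
  ⟨by simp, Or.inl (Or.inl ⟨i, rfl, rfl⟩)⟩

lemma adj_one_zero (n : ℕ) (i : Fin n) :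
    (friendship4 n).Adj (some (i, 1)) (some (i, 0)) :=
  ⟨by simp, Or.inr (Or.inr (Or.inl ⟨i, rfl, rfl⟩))⟩

lemma adj_two_none (n : ℕ) (i : Fin n) :
    (friendship4 n).Adj (some (i, 2)) none :=
  ⟨by simp, Or.inl (Or.inr (Or.inr (Or.inr ⟨i, rfl, rfl⟩)))⟩

theorem friendship4_min_tds (n : ℕ) (hn : 1 ≤ n) :
    isTDS (friendship4 n)
      (insert none (Finset.univ.image fun i : Fin n => some (i, (0 : Fin 3)))) ∧
    (insert none (Finset.univ.image fun i : Fin n => some (i, (0 : Fin 3)))).card = n + 1 ∧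
    ∀ D : Finset (Option (Fin n × Fin 3)), D.card ≤ n → ¬ isTDS (friendship4 n) D := by
  set i0 : Fin n := ⟨0, hn⟩
  refine ⟨?_, ?_, ?_⟩
  · rintro (_ | ⟨i, j⟩)
    · exact ⟨some (i0, 0), by simp, adj_none_zero n i0⟩
    · fin_cases j
      · exact ⟨none, by simp, (adj_none_zero n i).symm⟩
      · exact ⟨some (i, 0), by simp, adj_one_zero n i⟩
      · exact ⟨none, by simp, adj_two_none n i⟩
  · rw [Finset.card_insert_of_notMem (by simp), Finset.card_image_of_injective _ (by
      intro a b h; simpa using h), Finset.card_univ, Fintype.card_fin]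
  · intro D hcard hD
    -- choose for each i an element of D adjacent to (i,1)
    have hg : ∀ i : Fin n, ∃ u ∈ D, u = some (i, (0:Fin 3)) ∨ u = some (i, (2:Fin 3)) := by
      intro i
      obtain ⟨u, hu, hadj⟩ := hD (some (i, 1))
      exact ⟨u, hu, adj1' n i u hadj⟩
    choose g hgD hgval using hg
    have hginj : Function.Injective g := by
      intro a b hab
      rcases hgval a with h1 | h1 <;> rcases hgval b with h2 | h2 <;>
        rw [h1, h2] at hab <;> simp_all
    have hsub : Finset.univ.image g ⊆ D := by
      intro u hu; obtain ⟨i, _, rfl⟩ := Finset.mem_image.mp hu; exact hgD i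
    have hcard2 : (Finset.univ.image g).card = n := by
      rw [Finset.card_image_of_injective _ hginj, Finset.card_univ, Fintype.card_fin]
    have hEq : Finset.univ.image g = D :=
      Finset.eq_of_subset_of_card_le hsub (by omega)
    obtain ⟨u, hu, hadj⟩ := hD (some (i0, 0))
    rw [← hEq] at hu
    obtain ⟨i, _, rfl⟩ := Finset.mem_image.mp hu
    rcases adj0' n i0 _ hadj with h | h <;> rcases hgval i with h' | h' <;> simp_all
end

section
/- For n ≥ 3, the total domination polynomial of the chain triangular cactus T_n satisfies D_t(T_n,x) = (x+1) D_t(G_{n-1},x) + x^2 [D_t(G_{n-2},x) + D_t(G_{n-3},x)], where G_k denotes the chain triangular cactus of length k with a pendant vertex attached at the end cut-vertex. -/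
open Polynomial Finset

/-- The chain triangular cactus T_n : triangles on spine vertices u_0,...,u_n (first summand)
with apexes w_1,...,w_n (second summand); triangle i is u_{i-1}, u_i, w_i. -/
def triChain (n : ℕ) : SimpleGraph (Fin (n + 1) ⊕ Fin n) :=
  SimpleGraph.fromRel (fun a b =>
    (∃ i : Fin n, a = .inl i.castSucc ∧ b = .inl i.succ) ∨
    (∃ i : Fin n, a = .inl i.castSucc ∧ b = .inr i) ∨
    (∃ i : Fin n, a = .inl i.succ ∧ b = .inr i))

/-- G_n : the chain triangular cactus T_n with one pendant vertex attached at the last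
cut-vertex u_n. -/
def triChainPendant (n : ℕ) : SimpleGraph ((Fin (n + 1) ⊕ Fin n) ⊕ Unit) :=
  SimpleGraph.fromRel (fun a b =>
    (∃ x y, a = .inl x ∧ b = .inl y ∧ (triChain n).Adj x y) ∨
    (a = .inl (.inl (Fin.last n)) ∧ b = .inr ()))

/-!
Among the vertex sets of a graph that dominate every vertex except possibly a root `v`, let `S`
count (by `x ^ card`) those containing `v` and `Q` those avoiding `v`, and let `P` count the total
dominating sets containing `v`. Gluing a triangle `v u w` at `v` and moving the root to `u`
transforms these linearly: `S' = (x² + x)(S + Q)`, `P' = x²(S + Q) + x S`, `Q' = x S + P`, and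
`D_t = P' + Q'` for the new graph, since a set avoiding `u` that dominates `w` contains `v`.
Attaching a pendant vertex at `v` gives `D_t = P + x S`. The recurrence for `T_n` is a linear
combination of these identities along `T_{n-3} ⊂ T_{n-2} ⊂ T_{n-1} ⊂ T_n`.
-/

def TotallyDominates {V : Type*} (G : SimpleGraph V) (D : Finset V) (x : V) : Prop :=
  ∃ u ∈ D, G.Adj x u

def isTDSExcept {V : Type*} (G : SimpleGraph V) (v : V) (D : Finset V) : Prop :=
  ∀ x, x ≠ v → TotallyDominates G D x

open scoped Classical in
noncomputable def cardPoly {V : Type*} [Fintype V] (p : Finset V → Prop) : ℤ[X] :=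
  ∑ D, if p D then X ^ #D else 0

section General

variable {V W : Type*}

theorem isTDS_iff_forall_totallyDominates {G : SimpleGraph V} {D : Finset V} :
    isTDS G D ↔ ∀ x, TotallyDominates G D x := Iff.rfl

theorem isTDS_iff_isTDSExcept {G : SimpleGraph V} {D : Finset V} (v : V) :
    isTDS G D ↔ isTDSExcept G v D ∧ TotallyDominates G D v :=
  ⟨fun h => ⟨fun x _ => h x, h v⟩, fun ⟨h, hv⟩ x => (em (x = v)).elim (· ▸ hv) (h x)⟩

theorem tdPoly_eq_cardPoly [Fintype V] (G : SimpleGraph V) : tdPoly G = cardPoly (isTDS G) := by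
  classical
  rw [tdPoly, cardPoly, Subsingleton.elim (Fintype.ofFinite V) ‹_›, Finset.sum_filter]

theorem cardPoly_congr [Fintype V] {p q : Finset V → Prop} (h : ∀ D, p D ↔ q D) :
    cardPoly p = cardPoly q := by
  rw [funext fun D => propext (h D)]

theorem cardPoly_or [Fintype V] {p q : Finset V → Prop} (h : ∀ D, ¬ (p D ∧ q D)) :
    cardPoly (fun D => p D ∨ q D) = cardPoly p + cardPoly q := by
  classical
  simp only [cardPoly, ← Finset.sum_add_distrib]
  refine Finset.sum_congr rfl fun D _ => ?_
  by_cases hp : p D <;> by_cases hq : q D <;> simp_all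

theorem sum_finset_eq_sum_map_union [Fintype V] [Fintype W] [DecidableEq W] {M : Type*}
    [AddCommMonoid M] (ι : V ↪ W) {N : Finset W} (hN : ∀ y, y ∈ N ↔ y ∉ Set.range ι)
    (f : Finset W → M) :
    ∑ D, f D = ∑ E : Finset V, ∑ A ∈ N.powerset, f (E.map ι ∪ A) := by
  have hι : ∀ x, ι x ∉ N := fun x => (hN _).not_left.mpr ⟨x, rfl⟩
  have glue : ∀ D : Finset W, (D.preimage ι ι.injective.injOn).map ι ∪ D ∩ N = D := by
    intro D
    ext y
    by_cases hy : y ∈ Set.range ι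
    · obtain ⟨x, rfl⟩ := hy
      simp [hι]
    · simp only [Finset.mem_union, Finset.mem_map, Finset.mem_preimage, Finset.mem_inter,
        (hN y).mpr hy, and_true, or_iff_right_iff_imp]
      rintro ⟨x, -, rfl⟩
      exact absurd ⟨x, rfl⟩ hy
  rw [← Finset.sum_product']
  refine Finset.sum_nbij' (fun D => (D.preimage ι ι.injective.injOn, D ∩ N))
    (fun p => p.1.map ι ∪ p.2) (by simp) (by simp) (fun D _ => glue D) ?_
    (fun D _ => by rw [glue])
  rintro ⟨E, A⟩ hA
  rw [Finset.mem_product, Finset.mem_powerset] at hA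
  ext x
  · have : ι x ∉ A := fun h => hι x (hA.2 h)
    simp only [Finset.mem_preimage, Finset.mem_union, Finset.mem_map', this, or_false]
  · simp only [Finset.mem_inter, Finset.mem_union, Finset.mem_map]
    constructor
    · rintro ⟨⟨y, -, rfl⟩ | h, hN⟩
      · exact absurd hN (hι y)
      · exact h
    · exact fun h => ⟨Or.inr h, hA.2 h⟩

theorem sum_powerset_singleton {M : Type*} [DecidableEq V] [AddCommMonoid M] (a : V)
    (f : Finset V → M) : ∑ t ∈ ({a} : Finset V).powerset, f t = f ∅ + f {a} := by
  rw [← insert_empty_eq, Finset.sum_powerset_insert (Finset.notMem_empty a)]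
  simp

theorem sum_powerset_pair {M : Type*} [DecidableEq V] [AddCommMonoid M] {a b : V} (h : a ≠ b)
    (f : Finset V → M) :
    ∑ t ∈ ({a, b} : Finset V).powerset, f t = f ∅ + f {b} + (f {a} + f {a, b}) := by
  rw [Finset.sum_powerset_insert (by simpa using h), sum_powerset_singleton,
    sum_powerset_singleton]
  rfl

theorem card_map_union [DecidableEq W] {ι : V ↪ W} {E : Finset V} {A : Finset W}
    (hA : ∀ x, ι x ∉ A) :
    #(E.map ι ∪ A) = #E + #A := by
  rw [Finset.card_union_of_disjoint, Finset.card_map]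
  exact Finset.disjoint_left.2 fun y hy => by
    obtain ⟨x, -, rfl⟩ := Finset.mem_map.1 hy
    exact hA x

theorem totallyDominates_map_union [DecidableEq W] (H : SimpleGraph W) (ι : V ↪ W) (E : Finset V)
    (A : Finset W) (y : W) :
    TotallyDominates H (E.map ι ∪ A) y ↔
      (∃ x ∈ E, H.Adj y (ι x)) ∨ TotallyDominates H A y := by
  simp only [TotallyDominates, Finset.mem_union, Finset.mem_map, or_and_right, exists_or,
    exists_exists_and_eq_and]

theorem totallyDominates_map_union_emb [DecidableEq W] {G : SimpleGraph V} {H : SimpleGraph W}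
    {ι : V ↪ W} (hadj : ∀ x y, H.Adj (ι x) (ι y) ↔ G.Adj x y) (E : Finset V) (A : Finset W)
    (x : V) :
    TotallyDominates H (E.map ι ∪ A) (ι x) ↔
      TotallyDominates G E x ∨ TotallyDominates H A (ι x) := by
  rw [totallyDominates_map_union]
  simp only [hadj]
  rfl

theorem mem_map_union_iff_of_notMem_range [DecidableEq W] {ι : V ↪ W} {y : W}
    (hy : y ∉ Set.range ι) (E : Finset V) (A : Finset W) : y ∈ E.map ι ∪ A ↔ y ∈ A := by
  simp only [Finset.mem_union, Finset.mem_map, or_iff_right_iff_imp]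
  rintro ⟨x, -, rfl⟩
  exact absurd ⟨x, rfl⟩ hy

theorem forall_or_eq_and_iff {P : V → Prop} {v : V} {c : Prop} :
    (∀ x, P x ∨ (x = v ∧ c)) ↔ (∀ x, x ≠ v → P x) ∧ (P v ∨ c) := by
  constructor
  · exact fun h => ⟨fun x hx => (h x).resolve_right (hx ·.1), (h v).imp_right And.right⟩
  · rintro ⟨h, hv⟩ x
    by_cases hx : x = v
    · subst hx
      exact hv.imp_right (⟨rfl, ·⟩)
    · exact Or.inl (h x hx)

end General

section RootedPolys

variable {V : Type*} [Fintype V] (G : SimpleGraph V) (v : V)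

noncomputable def tdPolyMem : ℤ[X] := cardPoly fun D => v ∈ D ∧ isTDS G D

noncomputable def tdPolyExceptMem : ℤ[X] := cardPoly fun D => v ∈ D ∧ isTDSExcept G v D

noncomputable def tdPolyExceptNotMem : ℤ[X] := cardPoly fun D => v ∉ D ∧ isTDSExcept G v D

end RootedPolys

def withPendant {V : Type*} (G : SimpleGraph V) (v : V) : SimpleGraph (V ⊕ Unit) :=
  SimpleGraph.fromRel fun a b =>
    (∃ x y, a = .inl x ∧ b = .inl y ∧ G.Adj x y) ∨ (a = .inl v ∧ b = .inr ())

section Pendant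

variable {V : Type*} {G : SimpleGraph V} {v : V}

@[simp]
theorem withPendant_adj_inl_inl {x y : V} :
    (withPendant G v).Adj (.inl x) (.inl y) ↔ G.Adj x y := by
  simp only [withPendant, SimpleGraph.fromRel_adj, ne_eq, Sum.inl.injEq, reduceCtorEq, and_false,
    or_false, exists_and_left, exists_eq_left', G.adj_comm y x, or_self, and_iff_right_iff_imp]
  exact G.ne_of_adj

@[simp]
theorem withPendant_adj_inl_inr {x : V} : (withPendant G v).Adj (.inl x) (.inr ()) ↔ x = v := by
  simp [withPendant]

@[simp]
theorem withPendant_adj_inr_inl {x : V} : (withPendant G v).Adj (.inr ()) (.inl x) ↔ x = v := by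
  rw [SimpleGraph.adj_comm, withPendant_adj_inl_inr]

theorem isTDS_withPendant_iff [DecidableEq (V ⊕ Unit)] {E : Finset V} {A : Finset (V ⊕ Unit)}
    (hA : A ⊆ {.inr ()}) :
    isTDS (withPendant G v) (E.map .inl ∪ A) ↔
      isTDSExcept G v E ∧ (TotallyDominates G E v ∨ .inr () ∈ A) ∧ v ∈ E := by
  have hA' : ∀ x, TotallyDominates (withPendant G v) A (.inl x) ↔ x = v ∧ .inr () ∈ A := by
    intro x
    constructor
    · rintro ⟨y, hy, hadj⟩
      obtain rfl := Finset.mem_singleton.1 (hA hy)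
      exact ⟨withPendant_adj_inl_inr.1 hadj, hy⟩
    · rintro ⟨rfl, hp⟩
      exact ⟨_, hp, withPendant_adj_inl_inr.2 rfl⟩
  have hp : TotallyDominates (withPendant G v) (E.map .inl ∪ A) (.inr ()) ↔ v ∈ E := by
    have hpA : ¬ TotallyDominates (withPendant G v) A (.inr ()) := by
      rintro ⟨y, hy, hadj⟩
      rw [Finset.mem_singleton.1 (hA hy)] at hadj
      exact hadj.ne rfl
    simp [totallyDominates_map_union, hpA]
  have hinl (x : V) := totallyDominates_map_union_emb (G := G) (ι := .inl)
    (fun _ _ => withPendant_adj_inl_inl (v := v)) E A x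
  simp only [Function.Embedding.inl_apply, hA'] at hinl
  rw [isTDS_iff_forall_totallyDominates, Sum.forall, Unique.forall_iff (α := Unit), hp]
  simp only [hinl, forall_or_eq_and_iff, isTDSExcept, and_assoc]

theorem tdPoly_withPendant [Fintype V] :
    tdPoly (withPendant G v) = tdPolyMem G v + X * tdPolyExceptMem G v := by
  classical
  have hN (y : V ⊕ Unit) : y ∈ ({.inr ()} : Finset _) ↔ y ∉ Set.range .inl := by
    cases y <;> simp
  rw [tdPoly_eq_cardPoly, cardPoly, sum_finset_eq_sum_map_union .inl hN, tdPolyMem,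
    tdPolyExceptMem, cardPoly, cardPoly, Finset.mul_sum, ← Finset.sum_add_distrib]
  refine Finset.sum_congr rfl fun E _ => ?_
  rw [sum_powerset_singleton, isTDS_withPendant_iff (Finset.empty_subset _),
    isTDS_withPendant_iff subset_rfl, card_map_union (by simp), card_map_union (by simp),
    isTDS_iff_isTDSExcept v]
  split_ifs <;> simp_all <;> ring

end Pendant

/-- `H` is `G` with a triangle `v u w` glued at `v`: `ι` identifies `G` with the subgraph of `H`
induced on all vertices but the two new ones `u` and `w`. -/
structure IsTriangleAttachment {V W : Type*} (G : SimpleGraph V) (v : V) (H : SimpleGraph W)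
    (ι : V ↪ W) (u w : W) : Prop where
  compl_range : (Set.range ι)ᶜ = {u, w}
  adj_emb : ∀ x y, H.Adj (ι x) (ι y) ↔ G.Adj x y
  adj_emb_u : ∀ x, H.Adj (ι x) u ↔ x = v
  adj_emb_w : ∀ x, H.Adj (ι x) w ↔ x = v
  adj_u_w : H.Adj u w

namespace IsTriangleAttachment

variable {V W : Type*} {G : SimpleGraph V} {v : V} {H : SimpleGraph W} {ι : V ↪ W} {u w : W}

theorem u_ne_w (h : IsTriangleAttachment G v H ι u w) : u ≠ w := h.adj_u_w.ne

theorem notMem_range_iff (h : IsTriangleAttachment G v H ι u w) (y : W) :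
    y ∉ Set.range ι ↔ y = u ∨ y = w := by
  rw [← Set.mem_compl_iff, h.compl_range, Set.mem_insert_iff, Set.mem_singleton_iff]

theorem u_notMem_range (h : IsTriangleAttachment G v H ι u w) : u ∉ Set.range ι :=
  (h.notMem_range_iff u).2 (.inl rfl)

theorem forall_ne_u_iff (h : IsTriangleAttachment G v H ι u w) {P : W → Prop} :
    (∀ y, y ≠ u → P y) ↔ (∀ x, P (ι x)) ∧ P w := by
  refine ⟨fun hP => ⟨fun x => hP _ ?_, hP w h.u_ne_w.symm⟩, fun ⟨hι, hw⟩ y hy => ?_⟩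
  · exact fun hx => h.u_notMem_range (hx ▸ ⟨x, rfl⟩)
  · by_cases hr : y ∈ Set.range ι
    · obtain ⟨x, rfl⟩ := hr
      exact hι x
    · exact ((h.notMem_range_iff y).1 hr).resolve_left hy ▸ hw

section Split

variable [DecidableEq W] {E : Finset V} {A : Finset W}

theorem totallyDominates_emb_iff (h : IsTriangleAttachment G v H ι u w) (hA : A ⊆ {u, w})
    (x : V) : TotallyDominates H A (ι x) ↔ x = v ∧ (u ∈ A ∨ w ∈ A) := by
  constructor
  · rintro ⟨y, hy, hadj⟩
    rcases Finset.mem_insert.1 (hA hy) with rfl | hw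
    · exact ⟨(h.adj_emb_u x).1 hadj, Or.inl hy⟩
    · rw [Finset.mem_singleton.1 hw] at hy hadj
      exact ⟨(h.adj_emb_w x).1 hadj, Or.inr hy⟩
  · rintro ⟨rfl, hu | hw⟩
    · exact ⟨u, hu, (h.adj_emb_u _).2 rfl⟩
    · exact ⟨w, hw, (h.adj_emb_w _).2 rfl⟩

theorem totallyDominates_u_iff (h : IsTriangleAttachment G v H ι u w) (hA : A ⊆ {u, w}) :
    TotallyDominates H (E.map ι ∪ A) u ↔ v ∈ E ∨ w ∈ A := by
  have hA' : TotallyDominates H A u ↔ w ∈ A := by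
    refine ⟨fun ⟨y, hy, hadj⟩ => ?_, fun hw => ⟨w, hw, h.adj_u_w⟩⟩
    rcases Finset.mem_insert.1 (hA hy) with rfl | hw
    · exact absurd hadj (H.irrefl)
    · rwa [← Finset.mem_singleton.1 hw]
  simp [totallyDominates_map_union, hA', H.adj_comm u, h.adj_emb_u]

theorem totallyDominates_w_iff (h : IsTriangleAttachment G v H ι u w) (hA : A ⊆ {u, w}) :
    TotallyDominates H (E.map ι ∪ A) w ↔ v ∈ E ∨ u ∈ A := by
  have hA' : TotallyDominates H A w ↔ u ∈ A := by
    refine ⟨fun ⟨y, hy, hadj⟩ => ?_, fun hu => ⟨u, hu, h.adj_u_w.symm⟩⟩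
    rcases Finset.mem_insert.1 (hA hy) with rfl | hw
    · exact hy
    · exact absurd (Finset.mem_singleton.1 hw ▸ hadj) (H.irrefl)
  simp [totallyDominates_map_union, hA', H.adj_comm w, h.adj_emb_w]

theorem isTDSExcept_iff (h : IsTriangleAttachment G v H ι u w) (hA : A ⊆ {u, w}) :
    isTDSExcept H u (E.map ι ∪ A) ↔
      isTDSExcept G v E ∧ (TotallyDominates G E v ∨ u ∈ A ∨ w ∈ A) ∧
        (v ∈ E ∨ u ∈ A) := by
  rw [isTDSExcept, h.forall_ne_u_iff, h.totallyDominates_w_iff hA]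
  simp only [totallyDominates_map_union_emb h.adj_emb, h.totallyDominates_emb_iff hA,
    forall_or_eq_and_iff, isTDSExcept, and_assoc]

end Split

open scoped Classical in
theorem cardPoly_eq_sum [Fintype V] [Fintype W] (h : IsTriangleAttachment G v H ι u w)
    (p : Finset W → Prop) :
    cardPoly p = ∑ E : Finset V, ∑ A ∈ ({u, w} : Finset W).powerset,
      if p (E.map ι ∪ A) then X ^ (#E + #A) else 0 := by
  rw [cardPoly, sum_finset_eq_sum_map_union ι fun y => ?_]
  · refine Finset.sum_congr rfl fun E _ => Finset.sum_congr rfl fun A hA => ?_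
    have hA' : ∀ x, ι x ∉ A := fun x hx =>
      (h.notMem_range_iff _).2 (by simpa using Finset.mem_powerset.1 hA hx) ⟨x, rfl⟩
    rw [card_map_union hA']
  · rw [h.notMem_range_iff]; simp

theorem tdPolyExceptMem_eq [Fintype V] [Fintype W] (h : IsTriangleAttachment G v H ι u w) :
    tdPolyExceptMem H u = (X ^ 2 + X) * (tdPolyExceptMem G v + tdPolyExceptNotMem G v) := by
  classical
  rw [tdPolyExceptMem, h.cardPoly_eq_sum, tdPolyExceptMem, tdPolyExceptNotMem, cardPoly, cardPoly,
    ← Finset.sum_add_distrib, Finset.mul_sum]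
  refine Finset.sum_congr rfl fun E _ => ?_
  rw [Finset.sum_congr rfl fun A hA => by
    rw [h.isTDSExcept_iff (Finset.mem_powerset.1 hA),
      mem_map_union_iff_of_notMem_range h.u_notMem_range]]
  rw [sum_powerset_pair h.u_ne_w]
  split_ifs <;> simp_all [h.u_ne_w, h.u_ne_w.symm] <;> ring

theorem tdPolyMem_eq [Fintype V] [Fintype W] (h : IsTriangleAttachment G v H ι u w) :
    tdPolyMem H u = X ^ 2 * (tdPolyExceptMem G v + tdPolyExceptNotMem G v) +
      X * tdPolyExceptMem G v := by
  classical
  rw [tdPolyMem, h.cardPoly_eq_sum, tdPolyExceptMem, tdPolyExceptNotMem, cardPoly, cardPoly,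
    ← Finset.sum_add_distrib, Finset.mul_sum, Finset.mul_sum, ← Finset.sum_add_distrib]
  refine Finset.sum_congr rfl fun E _ => ?_
  rw [Finset.sum_congr rfl fun A hA => by
    rw [isTDS_iff_isTDSExcept u, h.isTDSExcept_iff (Finset.mem_powerset.1 hA),
      h.totallyDominates_u_iff (Finset.mem_powerset.1 hA),
      mem_map_union_iff_of_notMem_range h.u_notMem_range]]
  rw [sum_powerset_pair h.u_ne_w]
  split_ifs <;> simp_all [h.u_ne_w, h.u_ne_w.symm] <;> ring

theorem tdPolyExceptNotMem_eq [Fintype V] [Fintype W] (h : IsTriangleAttachment G v H ι u w) :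
    tdPolyExceptNotMem H u = X * tdPolyExceptMem G v + tdPolyMem G v := by
  classical
  rw [tdPolyExceptNotMem, h.cardPoly_eq_sum, tdPolyExceptMem, tdPolyMem, cardPoly, cardPoly,
    Finset.mul_sum, ← Finset.sum_add_distrib]
  refine Finset.sum_congr rfl fun E _ => ?_
  rw [Finset.sum_congr rfl fun A hA => by
    rw [h.isTDSExcept_iff (Finset.mem_powerset.1 hA),
      mem_map_union_iff_of_notMem_range h.u_notMem_range]]
  rw [sum_powerset_pair h.u_ne_w, isTDS_iff_isTDSExcept v]
  split_ifs <;> simp_all [h.u_ne_w, h.u_ne_w.symm] <;> ring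

theorem totallyDominates_u_of_isTDSExcept (h : IsTriangleAttachment G v H ι u w) {D : Finset W}
    (hD : isTDSExcept H u D) (hu : u ∉ D) : TotallyDominates H D u := by
  obtain ⟨y, hy, hadj⟩ := hD w h.u_ne_w.symm
  obtain ⟨x, rfl⟩ : y ∈ Set.range ι := by
    rw [← not_not (a := y ∈ _), h.notMem_range_iff]
    rintro (rfl | rfl)
    exacts [hu hy, H.irrefl hadj]
  obtain rfl := (h.adj_emb_w x).1 hadj.symm
  exact ⟨ι x, hy, ((h.adj_emb_u x).2 rfl).symm⟩

theorem tdPoly_eq [Fintype W] (h : IsTriangleAttachment G v H ι u w) :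
    tdPoly H = tdPolyMem H u + tdPolyExceptNotMem H u := by
  rw [tdPoly_eq_cardPoly, tdPolyMem, tdPolyExceptNotMem, ← cardPoly_or (by tauto)]
  refine cardPoly_congr fun D => ?_
  rw [isTDS_iff_isTDSExcept u]
  by_cases hu : u ∈ D
  · simp [hu]
  · simp only [hu, false_and, not_false_eq_true, true_and, false_or, and_iff_left_iff_imp]
    exact fun hD => h.totallyDominates_u_of_isTDSExcept hD hu

end IsTriangleAttachment

@[simp]
theorem triChain_adj_inl_inl {n : ℕ} {x y : Fin (n + 1)} :
    (triChain n).Adj (.inl x) (.inl y) ↔ (x : ℕ) + 1 = y ∨ (y : ℕ) + 1 = x := by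
  simp only [triChain, SimpleGraph.fromRel_adj, ne_eq, Sum.inl.injEq, Fin.ext_iff, reduceCtorEq,
    Fin.val_castSucc, Fin.val_succ, and_false, exists_false, or_false]
  constructor
  · rintro ⟨-, ⟨i, h1, h2⟩ | ⟨i, h1, h2⟩⟩ <;> omega
  · rintro (h | h)
    · exact ⟨by omega, .inl ⟨⟨x, by omega⟩, rfl, h.symm⟩⟩
    · exact ⟨by omega, .inr ⟨⟨y, by omega⟩, rfl, h.symm⟩⟩

@[simp]
theorem triChain_adj_inl_inr {n : ℕ} {x : Fin (n + 1)} {j : Fin n} :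
    (triChain n).Adj (.inl x) (.inr j) ↔ (x : ℕ) = j ∨ (x : ℕ) = j + 1 := by
  simp only [triChain, SimpleGraph.fromRel_adj, ne_eq, reduceCtorEq, not_false_eq_true,
    Sum.inl.injEq, Fin.ext_iff, Fin.val_castSucc, and_false, exists_false, Sum.inr.injEq,
    Fin.val_succ, false_or, false_and, and_self, or_self, or_false, true_and]
  constructor
  · rintro (⟨i, h1, h2⟩ | ⟨i, h1, h2⟩) <;> omega
  · rintro (h | h)
    exacts [.inl ⟨j, h, rfl⟩, .inr ⟨j, h, rfl⟩]

@[simp]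
theorem triChain_not_adj_inr_inr {n : ℕ} {i j : Fin n} :
    ¬ (triChain n).Adj (.inr i) (.inr j) := by
  simp [triChain]

@[simp]
theorem triChain_adj_inr_inl {n : ℕ} {x : Fin (n + 1)} {j : Fin n} :
    (triChain n).Adj (.inr j) (.inl x) ↔ (x : ℕ) = j ∨ (x : ℕ) = j + 1 := by
  rw [SimpleGraph.adj_comm, triChain_adj_inl_inr]

theorem triChain_isTriangleAttachment (n : ℕ) :
    IsTriangleAttachment (triChain n) (.inl (Fin.last n)) (triChain (n + 1))
      (Function.Embedding.sumMap Fin.castSuccEmb Fin.castSuccEmb) (.inl (Fin.last (n + 1)))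
      (.inr (Fin.last n)) where
  compl_range := by
    ext (x | x) <;> simp [Fin.exists_castSucc_eq]
  adj_emb := by rintro (x | i) (y | j) <;> simp
  adj_emb_u := by
    rintro (x | i) <;>
      simp only [Function.Embedding.coe_sumMap, Fin.coe_castSuccEmb, Sum.map_inl, Sum.map_inr,
        triChain_adj_inl_inl, triChain_adj_inr_inl, Fin.val_castSucc, Fin.val_last, Sum.inl.injEq,
        reduceCtorEq, Fin.ext_iff, iff_false, not_or] <;> omega
  adj_emb_w := by
    rintro (x | i) <;>
      simp only [Function.Embedding.coe_sumMap, Fin.coe_castSuccEmb, Sum.map_inl, Sum.map_inr,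
        triChain_adj_inl_inr, triChain_not_adj_inr_inr, Fin.val_castSucc, Fin.val_last,
        Sum.inl.injEq, reduceCtorEq, Fin.ext_iff]
    omega
  adj_u_w := by simp

theorem tdPoly_triChainPendant (n : ℕ) :
    tdPoly (triChainPendant n) = tdPolyMem (triChain n) (.inl (Fin.last n)) +
      X * tdPolyExceptMem (triChain n) (.inl (Fin.last n)) :=
  tdPoly_withPendant

theorem tdPoly_triChain_rec (n : ℕ) (hn : 3 ≤ n) :
    tdPoly (triChain n) =
      (X + 1) * tdPoly (triChainPendant (n - 1)) +
        X ^ 2 * (tdPoly (triChainPendant (n - 2)) + tdPoly (triChainPendant (n - 3))) := by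
  obtain ⟨m, rfl⟩ := Nat.exists_eq_add_of_le' hn
  rw [show m + 3 - 1 = m + 2 from rfl, show m + 3 - 2 = m + 1 from rfl,
    show m + 3 - 3 = m from rfl]
  have h₀ := triChain_isTriangleAttachment m
  have h₁ := triChain_isTriangleAttachment (m + 1)
  have h₂ := triChain_isTriangleAttachment (m + 2)
  rw [h₂.tdPoly_eq, h₂.tdPolyMem_eq, h₂.tdPolyExceptNotMem_eq, tdPoly_triChainPendant,
    tdPoly_triChainPendant, tdPoly_triChainPendant]
  linear_combination X ^ 2 * h₁.tdPolyExceptNotMem_eq + X * h₁.tdPolyExceptMem_eq -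
    X * h₁.tdPolyMem_eq + X ^ 2 * h₀.tdPolyExceptNotMem_eq
end

section
/- For n ≥ 3, the total domination polynomial of the ortho-chain square cactus O_n satisfies D_t(O_n,x) = x(x+2)[(x+1) D_t(O_{n-1},x) − D_t(O_{n-2}(2),x)], with D_t(O_1,x) = x^4 + 4x^3 + 4x^2 and D_t(O_2,x) = D_t(F_{2,4},x), where for k ≥ 1, D_t(O_k(2),x) = x[(x+1)D_t(O_k,x) − D_t(O_{k-1}(2),x)] and D_t(O_0(2),x) = x^3 + 2x^2. -/
open Polynomial Finset

/-- The ortho-chain square cactus O_n : squares c_{i-1} — c_i — a_i — b_i — c_{i-1},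
consecutive squares sharing the cut vertices c_i (which are adjacent on each square). -/
def orthoChain (n : ℕ) : SimpleGraph (Fin (n + 1) ⊕ Fin n ⊕ Fin n) :=
  SimpleGraph.fromRel (fun x y =>
    (∃ i : Fin n, x = .inl i.castSucc ∧ y = .inl i.succ) ∨
    (∃ i : Fin n, x = .inl i.succ ∧ y = .inr (.inl i)) ∨
    (∃ i : Fin n, x = .inr (.inl i) ∧ y = .inr (.inr i)) ∨
    (∃ i : Fin n, x = .inr (.inr i) ∧ y = .inl i.castSucc))

/-- O_n(2) : the ortho-chain O_n with a pendant path on two new vertices appended at the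
terminal attachment vertex c_n. -/
def orthoChain2 (n : ℕ) : SimpleGraph ((Fin (n + 1) ⊕ Fin n ⊕ Fin n) ⊕ Fin 2) :=
  SimpleGraph.fromRel (fun x y =>
    (∃ a b, x = .inl a ∧ y = .inl b ∧ (orthoChain n).Adj a b) ∨
    (x = .inl (.inl (Fin.last n)) ∧ y = .inr 0) ∨
    (x = .inr 0 ∧ y = .inr 1))

section AuxDev
namespace TDAux
open SimpleGraph

set_option linter.unreachableTactic false
set_option linter.unnecessarySeqFocus false
set_option linter.unusedTactic false

abbrev Vtx (n : ℕ) := Fin (n+1) ⊕ Fin n ⊕ Fin n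

/-! ### Adjacency characterizations for `orthoChain` -/

lemma adj_cc {n : ℕ} {p q : Fin (n+1)} :
    (orthoChain n).Adj (.inl p) (.inl q) ↔ ((q:ℕ) = p + 1 ∨ (p:ℕ) = q + 1) := by
  simp only [orthoChain, SimpleGraph.fromRel_adj]
  constructor
  · rintro ⟨-, (⟨i,h1,h2⟩|⟨i,h1,h2⟩|⟨i,h1,h2⟩|⟨i,h1,h2⟩)|(⟨i,h1,h2⟩|⟨i,h1,h2⟩|⟨i,h1,h2⟩|⟨i,h1,h2⟩)⟩ <;>
      simp_all [Fin.ext_iff] <;> omega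
  · rintro (h|h)
    · have hi : (p:ℕ) < n := by omega
      refine ⟨by simp [Fin.ext_iff]; omega, Or.inl (Or.inl ⟨⟨p, hi⟩, ?_, ?_⟩)⟩ <;>
        simp [Fin.ext_iff] <;> omega
    · have hi : (q:ℕ) < n := by omega
      refine ⟨by simp [Fin.ext_iff]; omega, Or.inr (Or.inl ⟨⟨q, hi⟩, ?_, ?_⟩)⟩ <;>
        simp [Fin.ext_iff] <;> omega

lemma adj_ca {n : ℕ} {p : Fin (n+1)} {q : Fin n} :
    (orthoChain n).Adj (.inl p) (.inr (.inl q)) ↔ (p:ℕ) = q + 1 := by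
  simp only [orthoChain, SimpleGraph.fromRel_adj]
  constructor
  · rintro ⟨-, (⟨i,h1,h2⟩|⟨i,h1,h2⟩|⟨i,h1,h2⟩|⟨i,h1,h2⟩)|(⟨i,h1,h2⟩|⟨i,h1,h2⟩|⟨i,h1,h2⟩|⟨i,h1,h2⟩)⟩ <;>
      simp_all [Fin.ext_iff] <;> omega
  · intro h
    exact ⟨by simp, Or.inl (Or.inr (Or.inl ⟨q, by simp [Fin.ext_iff]; omega, rfl⟩))⟩

lemma adj_cb {n : ℕ} {p : Fin (n+1)} {q : Fin n} :
    (orthoChain n).Adj (.inl p) (.inr (.inr q)) ↔ (p:ℕ) = q := by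
  simp only [orthoChain, SimpleGraph.fromRel_adj]
  constructor
  · rintro ⟨-, (⟨i,h1,h2⟩|⟨i,h1,h2⟩|⟨i,h1,h2⟩|⟨i,h1,h2⟩)|(⟨i,h1,h2⟩|⟨i,h1,h2⟩|⟨i,h1,h2⟩|⟨i,h1,h2⟩)⟩ <;>
      simp_all [Fin.ext_iff] <;> omega
  · intro h
    exact ⟨by simp, Or.inr (Or.inr (Or.inr (Or.inr ⟨q, rfl, by simp [Fin.ext_iff]; omega⟩)))⟩

lemma adj_ab {n : ℕ} {p q : Fin n} :
    (orthoChain n).Adj (.inr (.inl p)) (.inr (.inr q)) ↔ p = q := by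
  simp only [orthoChain, SimpleGraph.fromRel_adj]
  constructor
  · rintro ⟨-, (⟨i,h1,h2⟩|⟨i,h1,h2⟩|⟨i,h1,h2⟩|⟨i,h1,h2⟩)|(⟨i,h1,h2⟩|⟨i,h1,h2⟩|⟨i,h1,h2⟩|⟨i,h1,h2⟩)⟩ <;>
      simp_all [Fin.ext_iff] <;> omega
  · rintro rfl
    exact ⟨by simp, Or.inl (Or.inr (Or.inr (Or.inl ⟨p, rfl, rfl⟩)))⟩

lemma adj_aa {n : ℕ} {p q : Fin n} :
    (orthoChain n).Adj (.inr (.inl p)) (.inr (.inl q)) ↔ False := by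
  simp only [orthoChain, SimpleGraph.fromRel_adj, iff_false]
  rintro ⟨-, (⟨i,h1,h2⟩|⟨i,h1,h2⟩|⟨i,h1,h2⟩|⟨i,h1,h2⟩)|(⟨i,h1,h2⟩|⟨i,h1,h2⟩|⟨i,h1,h2⟩|⟨i,h1,h2⟩)⟩ <;>
      simp_all

lemma adj_bb {n : ℕ} {p q : Fin n} :
    (orthoChain n).Adj (.inr (.inr p)) (.inr (.inr q)) ↔ False := by
  simp only [orthoChain, SimpleGraph.fromRel_adj, iff_false]
  rintro ⟨-, (⟨i,h1,h2⟩|⟨i,h1,h2⟩|⟨i,h1,h2⟩|⟨i,h1,h2⟩)|(⟨i,h1,h2⟩|⟨i,h1,h2⟩|⟨i,h1,h2⟩|⟨i,h1,h2⟩)⟩ <;>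
      simp_all

lemma adj_ac {n : ℕ} {p : Fin (n+1)} {q : Fin n} :
    (orthoChain n).Adj (.inr (.inl q)) (.inl p) ↔ (p:ℕ) = q + 1 := by
  rw [SimpleGraph.adj_comm]; exact adj_ca

lemma adj_bc {n : ℕ} {p : Fin (n+1)} {q : Fin n} :
    (orthoChain n).Adj (.inr (.inr q)) (.inl p) ↔ (p:ℕ) = q := by
  rw [SimpleGraph.adj_comm]; exact adj_cb

lemma adj_ba {n : ℕ} {p q : Fin n} :
    (orthoChain n).Adj (.inr (.inr p)) (.inr (.inl q)) ↔ q = p := by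
  rw [SimpleGraph.adj_comm]; exact adj_ab

/-! ### Generic sum tools -/

lemma tdPoly_eq {V : Type*} [Fintype V] (G : SimpleGraph V) [DecidablePred (isTDS G)] :
    tdPoly G = ∑ D : Finset V,
      if isTDS G D then (X : Polynomial ℤ) ^ D.card else 0 := by
  unfold tdPoly
  rw [Finset.sum_filter]
  congr!

lemma sum_finset_sum {α β M : Type*} [DecidableEq α] [DecidableEq β] [Fintype α] [Fintype β]
    [AddCommMonoid M] (f : Finset (α ⊕ β) → M) :
    ∑ D : Finset (α ⊕ β), f D = ∑ A : Finset α, ∑ B : Finset β, f (A.disjSum B) := by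
  calc ∑ D : Finset (α ⊕ β), f D
      = ∑ p : Finset α × Finset β, f (p.1.disjSum p.2) :=
        Fintype.sum_equiv
          ⟨fun D => (D.toLeft, D.toRight), fun p => p.1.disjSum p.2,
            fun D => Finset.toLeft_disjSum_toRight, fun p => by simp⟩
          f (fun p => f (p.1.disjSum p.2))
          (fun D => by simp [Finset.toLeft_disjSum_toRight])
    _ = ∑ A : Finset α, ∑ B : Finset β, f (A.disjSum B) := by
        rw [Fintype.sum_prod_type]

lemma sum_finset_fin2 {M : Type*} [AddCommMonoid M] (f : Finset (Fin 2) → M) :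
    ∑ B : Finset (Fin 2), f B = f ∅ + f {0} + f {1} + f {0,1} := by
  have h : (univ : Finset (Finset (Fin 2))) = {∅, {0}, {1}, {0,1}} := by decide
  rw [h]
  rw [Finset.sum_insert (by decide), Finset.sum_insert (by decide),
    Finset.sum_insert (by decide), Finset.sum_singleton]
  abel

lemma sum_finset_fin3 {M : Type*} [AddCommMonoid M] (f : Finset (Fin 3) → M) :
    ∑ B : Finset (Fin 3), f B =
      f ∅ + f {0} + f {1} + f {2} + f {0,1} + f {0,2} + f {1,2} + f {0,1,2} := by
  have h : (univ : Finset (Finset (Fin 3))) =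
      {∅, {0}, {1}, {2}, {0,1}, {0,2}, {1,2}, {0,1,2}} := by decide
  rw [h]
  rw [Finset.sum_insert (by decide), Finset.sum_insert (by decide),
    Finset.sum_insert (by decide), Finset.sum_insert (by decide),
    Finset.sum_insert (by decide), Finset.sum_insert (by decide),
    Finset.sum_insert (by decide), Finset.sum_singleton]
  abel

lemma exists_disjSum {α β : Type*} {A : Finset α} {B : Finset β} {P : α ⊕ β → Prop} :
    (∃ u ∈ A.disjSum B, P u) ↔ (∃ a ∈ A, P (.inl a)) ∨ (∃ b ∈ B, P (.inr b)) := by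
  constructor
  · rintro ⟨u, hu, hp⟩
    rcases Finset.mem_disjSum.1 hu with ⟨a, ha, rfl⟩ | ⟨b, hb, rfl⟩
    · exact Or.inl ⟨a, ha, hp⟩
    · exact Or.inr ⟨b, hb, hp⟩
  · rintro (⟨a, ha, hp⟩ | ⟨b, hb, hp⟩)
    · exact ⟨.inl a, Finset.inl_mem_disjSum.2 ha, hp⟩
    · exact ⟨.inr b, Finset.inr_mem_disjSum.2 hb, hp⟩

/-! ### The partial-TDS state polynomials -/

/-- All vertices except the terminal cut vertex `c_n` are dominated. -/
def pTDS (n : ℕ) (D : Finset (Vtx n)) : Prop :=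
  ∀ v : Vtx n, v ≠ .inl (Fin.last n) → ∃ u ∈ D, (orthoChain n).Adj v u

noncomputable def pS (n : ℕ) : Polynomial ℤ :=
  letI : DecidablePred (pTDS n) := Classical.decPred _
  ∑ D : Finset (Vtx n), if pTDS n D then X ^ D.card else 0

noncomputable def pT (n : ℕ) : Polynomial ℤ :=
  letI : DecidablePred (fun D : Finset (Vtx n) => pTDS n D ∧ .inl (Fin.last n) ∈ D) :=
    Classical.decPred _
  ∑ D : Finset (Vtx n),
    if pTDS n D ∧ .inl (Fin.last n) ∈ D then X ^ D.card else 0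

end TDAux
end AuxDev
section AuxDev2
namespace TDAux
open SimpleGraph

set_option linter.unreachableTactic false
set_option linter.unusedTactic false

/-! ### Adjacency for `orthoChain2` -/

lemma p2_adj_ll {n : ℕ} {x y : Vtx n} :
    (orthoChain2 n).Adj (.inl x) (.inl y) ↔ (orthoChain n).Adj x y := by
  simp only [orthoChain2, SimpleGraph.fromRel_adj]
  constructor
  · rintro ⟨hne, (⟨a,b,h1,h2,hadj⟩|⟨h1,h2⟩|⟨h1,h2⟩)|(⟨a,b,h1,h2,hadj⟩|⟨h1,h2⟩|⟨h1,h2⟩)⟩ <;>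
      simp_all
    · exact hadj.symm
  · intro h
    exact ⟨by simpa using h.ne, Or.inl (Or.inl ⟨x, y, rfl, rfl, h⟩)⟩

lemma p2_adj_lr {n : ℕ} {x : Vtx n} {j : Fin 2} :
    (orthoChain2 n).Adj (.inl x) (.inr j) ↔ x = .inl (Fin.last n) ∧ j = 0 := by
  simp only [orthoChain2, SimpleGraph.fromRel_adj]
  constructor
  · rintro ⟨hne, (⟨a,b,h1,h2,hadj⟩|⟨h1,h2⟩|⟨h1,h2⟩)|(⟨a,b,h1,h2,hadj⟩|⟨h1,h2⟩|⟨h1,h2⟩)⟩ <;>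
      simp_all
  · rintro ⟨rfl, rfl⟩
    exact ⟨by simp, Or.inl (Or.inr (Or.inl ⟨rfl, rfl⟩))⟩

lemma p2_adj_rl {n : ℕ} {x : Vtx n} {j : Fin 2} :
    (orthoChain2 n).Adj (.inr j) (.inl x) ↔ x = .inl (Fin.last n) ∧ j = 0 := by
  rw [SimpleGraph.adj_comm]; exact p2_adj_lr

lemma p2_adj_rr {n : ℕ} {i j : Fin 2} :
    (orthoChain2 n).Adj (.inr i) (.inr j) ↔ (i = 0 ∧ j = 1) ∨ (i = 1 ∧ j = 0) := by
  simp only [orthoChain2, SimpleGraph.fromRel_adj]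
  constructor
  · rintro ⟨hne, (⟨a,b,h1,h2,hadj⟩|⟨h1,h2⟩|⟨h1,h2⟩)|(⟨a,b,h1,h2,hadj⟩|⟨h1,h2⟩|⟨h1,h2⟩)⟩ <;>
      simp_all
  · rintro (⟨rfl, rfl⟩ | ⟨rfl, rfl⟩)
    · exact ⟨by simp, Or.inl (Or.inr (Or.inr ⟨rfl, rfl⟩))⟩
    · exact ⟨by simp, Or.inr (Or.inr (Or.inr ⟨rfl, rfl⟩))⟩

/-- The structure of total dominating sets of `orthoChain2 n`. -/
lemma isTDS_oc2_iff {n : ℕ} (A : Finset (Vtx n)) (B : Finset (Fin 2)) :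
    isTDS (orthoChain2 n) (A.disjSum B) ↔
      (pTDS n A ∧ (0 : Fin 2) ∈ B ∧
        ((.inl (Fin.last n) : Vtx n) ∈ A ∨ (1 : Fin 2) ∈ B)) := by
  constructor
  · intro h
    refine ⟨?_, ?_, ?_⟩
    · intro v hv
      rcases exists_disjSum.1 (h (.inl v)) with ⟨a, ha, hadj⟩ | ⟨b, hb, hadj⟩
      · exact ⟨a, ha, p2_adj_ll.1 hadj⟩
      · exact absurd (p2_adj_lr.1 hadj).1 hv
    · rcases exists_disjSum.1 (h (.inr 1)) with ⟨a, ha, hadj⟩ | ⟨b, hb, hadj⟩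
      · rcases p2_adj_rl.1 hadj with ⟨-, h10⟩; exact absurd h10 (by decide)
      · rcases p2_adj_rr.1 hadj with ⟨h10, -⟩ | ⟨-, rfl⟩
        · exact absurd h10 (by decide)
        · exact hb
    · rcases exists_disjSum.1 (h (.inr 0)) with ⟨a, ha, hadj⟩ | ⟨b, hb, hadj⟩
      · rcases p2_adj_rl.1 hadj with ⟨rfl, -⟩; exact Or.inl ha
      · rcases p2_adj_rr.1 hadj with ⟨-, rfl⟩ | ⟨h10, -⟩
        · exact Or.inr hb
        · exact absurd h10 (by decide)
  · rintro ⟨hp, h0, hlast⟩ v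
    rcases v with x | j
    · by_cases hx : x = .inl (Fin.last n)
      · subst hx
        exact ⟨.inr 0, Finset.inr_mem_disjSum.2 h0, p2_adj_lr.2 ⟨rfl, rfl⟩⟩
      · obtain ⟨u, hu, hadj⟩ := hp x hx
        exact ⟨.inl u, Finset.inl_mem_disjSum.2 hu, p2_adj_ll.2 hadj⟩
    · fin_cases j
      · rcases hlast with hA | hB
        · exact ⟨.inl (.inl (Fin.last n)), Finset.inl_mem_disjSum.2 hA,
            p2_adj_rl.2 ⟨rfl, rfl⟩⟩
        · exact ⟨.inr 1, Finset.inr_mem_disjSum.2 hB, p2_adj_rr.2 (Or.inl ⟨rfl, rfl⟩)⟩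
      · exact ⟨.inr 0, Finset.inr_mem_disjSum.2 h0, p2_adj_rr.2 (Or.inr ⟨rfl, rfl⟩)⟩

/-- Pendant decomposition :  `D_t(O_n(2)) = X² · pS n + X · pT n`. -/
lemma tdPoly_oc2 (n : ℕ) :
    tdPoly (orthoChain2 n) = X ^ 2 * pS n + X * pT n := by
  classical
  rw [tdPoly_eq (orthoChain2 n)]
  rw [sum_finset_sum (fun D => if isTDS (orthoChain2 n) D then (X : Polynomial ℤ) ^ D.card else 0)]
  have step : ∀ A : Finset (Vtx n),
      (∑ B : Finset (Fin 2),
        if isTDS (orthoChain2 n) (A.disjSum B) then (X : Polynomial ℤ) ^ (A.disjSum B).card else 0)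
      = X ^ 2 * (if pTDS n A then X ^ A.card else 0)
        + X * (if pTDS n A ∧ .inl (Fin.last n) ∈ A then X ^ A.card else 0) := by
    intro A
    rw [sum_finset_fin2]
    simp only [isTDS_oc2_iff, Finset.card_disjSum]
    by_cases hp : pTDS n A <;> by_cases hm : (.inl (Fin.last n) : Vtx n) ∈ A <;>
      simp [hp, hm] <;> ring
  rw [Finset.sum_congr rfl (fun A _ => step A)]
  rw [Finset.sum_add_distrib, ← Finset.mul_sum, ← Finset.mul_sum]
  rw [pS, pT]
  congr!

end TDAux
end AuxDev2
section AuxDev3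
namespace TDAux
open SimpleGraph

set_option linter.unreachableTactic false
set_option linter.unusedTactic false

/-! ### Embedding `O_n` into `O_{n+1}` -/

def iot (n : ℕ) : Vtx n → Vtx (n+1) :=
  Sum.map Fin.castSucc (Sum.map Fin.castSucc Fin.castSucc)

def newV (n : ℕ) : Fin 3 → Vtx (n+1)
  | 0 => .inl (Fin.last (n+1))
  | 1 => .inr (.inl (Fin.last n))
  | 2 => .inr (.inr (Fin.last n))

def E (n : ℕ) : Vtx n ⊕ Fin 3 ≃ Vtx (n+1) where
  toFun := Sum.elim (iot n) (newV n)
  invFun v :=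
    match v with
    | .inl p => if h : (p:ℕ) < n+1 then .inl (.inl ⟨p, h⟩) else .inr 0
    | .inr (.inl q) => if h : (q:ℕ) < n then .inl (.inr (.inl ⟨q, h⟩)) else .inr 1
    | .inr (.inr q) => if h : (q:ℕ) < n then .inl (.inr (.inr ⟨q, h⟩)) else .inr 2
  left_inv := by
    rintro ((p | q | q) | j)
    · simp only [Sum.elim_inl, iot, Sum.map_inl]
      rw [dif_pos (by simpa using p.isLt)]
      simp [Fin.ext_iff]
    · simp only [Sum.elim_inl, iot, Sum.map_inr, Sum.map_inl]
      rw [dif_pos (by simpa using q.isLt)]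
      simp [Fin.ext_iff]
    · simp only [Sum.elim_inl, iot, Sum.map_inr]
      rw [dif_pos (by simpa using q.isLt)]
      simp [Fin.ext_iff]
    · fin_cases j <;> simp only [Sum.elim_inr, newV] <;>
        rw [dif_neg (by simp [Fin.last])] <;> rfl
  right_inv := by
    rintro (p | q | q) <;> dsimp only
    · by_cases h : (p:ℕ) < n+1
      · rw [dif_pos h]; simp [iot, Fin.ext_iff]
      · rw [dif_neg h]
        have : p = Fin.last (n+1) := by
          simp [Fin.ext_iff, Fin.last]; omega
        simp [newV, this]
    · by_cases h : (q:ℕ) < n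
      · rw [dif_pos h]; simp [iot, Fin.ext_iff]
      · rw [dif_neg h]
        have : q = Fin.last n := by
          simp [Fin.ext_iff, Fin.last]; omega
        simp [newV, this]
    · by_cases h : (q:ℕ) < n
      · rw [dif_pos h]; simp [iot, Fin.ext_iff]
      · rw [dif_neg h]
        have : q = Fin.last n := by
          simp [Fin.ext_iff, Fin.last]; omega
        simp [newV, this]

lemma adj_iot {n : ℕ} {x y : Vtx n} :
    (orthoChain (n+1)).Adj (iot n x) (iot n y) ↔ (orthoChain n).Adj x y := by
  rcases x with p | q | q <;> rcases y with p' | q' | q' <;>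
    simp [iot, adj_cc, adj_ca, adj_cb, adj_ab, adj_aa, adj_bb, adj_ac, adj_bc, adj_ba,
      Fin.ext_iff] <;> omega

lemma adj_iot_nc {n : ℕ} {x : Vtx n} :
    (orthoChain (n+1)).Adj (iot n x) (newV n 0) ↔ x = .inl (Fin.last n) := by
  rcases x with p | q | q <;>
    simp [iot, newV, adj_cc, adj_ac, adj_bc, Fin.ext_iff, Fin.last] <;> omega

lemma adj_iot_na {n : ℕ} {x : Vtx n} :
    (orthoChain (n+1)).Adj (iot n x) (newV n 1) ↔ False := by
  rcases x with p | q | q <;>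
    simp [iot, newV, adj_ca, adj_aa, adj_ba, Fin.ext_iff, Fin.last] <;> omega

lemma adj_iot_nb {n : ℕ} {x : Vtx n} :
    (orthoChain (n+1)).Adj (iot n x) (newV n 2) ↔ x = .inl (Fin.last n) := by
  rcases x with p | q | q <;>
    simp [iot, newV, adj_cb, adj_ab, adj_bb, Fin.ext_iff, Fin.last] <;> omega

lemma adj_na_nc {n : ℕ} : (orthoChain (n+1)).Adj (newV n 1) (newV n 0) := by
  simp [newV, adj_ac, Fin.last]

lemma adj_na_nb {n : ℕ} : (orthoChain (n+1)).Adj (newV n 1) (newV n 2) := by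
  simp [newV, adj_ab]

lemma adj_nb_nc {n : ℕ} : ¬ (orthoChain (n+1)).Adj (newV n 2) (newV n 0) := by
  simp [newV, adj_bc, Fin.last]

end TDAux
end AuxDev3
section AuxDev4
namespace TDAux
open SimpleGraph

set_option linter.unreachableTactic false
set_option linter.unusedTactic false

lemma exists_fin3 {B : Finset (Fin 3)} {P : Fin 3 → Prop} :
    (∃ j ∈ B, P j) ↔ ((0:Fin 3) ∈ B ∧ P 0) ∨ ((1:Fin 3) ∈ B ∧ P 1) ∨ ((2:Fin 3) ∈ B ∧ P 2) := by
  constructor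
  · rintro ⟨j, hj, hp⟩
    fin_cases j
    · exact Or.inl ⟨hj, hp⟩
    · exact Or.inr (Or.inl ⟨hj, hp⟩)
    · exact Or.inr (Or.inr ⟨hj, hp⟩)
  · rintro (⟨h, p⟩ | ⟨h, p⟩ | ⟨h, p⟩) <;> exact ⟨_, h, p⟩

lemma dom_map {n : ℕ} {A : Finset (Vtx n)} {B : Finset (Fin 3)} {w : Vtx (n+1)} :
    (∃ u ∈ (A.disjSum B).map (E n).toEmbedding, (orthoChain (n+1)).Adj w u) ↔
      (∃ a ∈ A, (orthoChain (n+1)).Adj w (iot n a)) ∨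
        (∃ j ∈ B, (orthoChain (n+1)).Adj w (newV n j)) := by
  constructor
  · rintro ⟨u, hu, hadj⟩
    obtain ⟨x, hx, rfl⟩ := Finset.mem_map.1 hu
    exact (exists_disjSum
      (P := fun x => (orthoChain (n+1)).Adj w ((E n) x))).1 ⟨x, hx, hadj⟩
  · intro h
    obtain ⟨x, hx, hadj⟩ := (exists_disjSum
      (P := fun x => (orthoChain (n+1)).Adj w ((E n) x))).2 h
    exact ⟨(E n).toEmbedding x, Finset.mem_map_of_mem _ hx, hadj⟩

lemma nc_mem {n : ℕ} {A : Finset (Vtx n)} {B : Finset (Fin 3)} :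
    (.inl (Fin.last (n+1)) : Vtx (n+1)) ∈ (A.disjSum B).map (E n).toEmbedding ↔
      (0 : Fin 3) ∈ B := by
  have h : (.inl (Fin.last (n+1)) : Vtx (n+1)) = E n (.inr 0) := rfl
  rw [h, Finset.mem_map_equiv, Equiv.symm_apply_apply, Finset.inr_mem_disjSum]

lemma iot_ne_nc {n : ℕ} (v : Vtx n) : iot n v ≠ .inl (Fin.last (n+1)) := by
  rcases v with p | q | q <;> simp [iot, Fin.ext_iff, Fin.last] <;> omega

/-- Master characterization of partial TDS after appending one square. -/
lemma pTDS_succ_iff {n : ℕ} (A : Finset (Vtx n)) (B : Finset (Fin 3)) :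
    pTDS (n+1) ((A.disjSum B).map (E n).toEmbedding) ↔
      (pTDS n A ∧ ((0:Fin 3) ∈ B ∨ (2:Fin 3) ∈ B) ∧
        ((.inl (Fin.last n) : Vtx n) ∈ A ∨ (1:Fin 3) ∈ B)) := by
  unfold pTDS
  rw [(E n).surjective.forall]
  rw [Sum.forall]
  constructor
  · rintro ⟨hold, hnew⟩
    have hna := hnew 1 (by simp [E, newV, Fin.ext_iff, Fin.last])
    have hnb := hnew 2 (by simp [E, newV, Fin.ext_iff, Fin.last])
    rw [show (E n) (.inr 1) = newV n 1 from rfl, dom_map] at hna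
    rw [show (E n) (.inr 2) = newV n 2 from rfl, dom_map] at hnb
    refine ⟨?_, ?_, ?_⟩
    · intro v hv
      have := hold v (by exact fun h => iot_ne_nc v h)
      rw [show (E n) (.inl v) = iot n v from rfl, dom_map] at this
      rcases this with ⟨a, ha, hadj⟩ | hj
      · exact ⟨a, ha, adj_iot.1 hadj⟩
      · rw [exists_fin3] at hj
        rcases hj with ⟨-, h0⟩ | ⟨-, h1⟩ | ⟨-, h2⟩
        · exact absurd (adj_iot_nc.1 h0) hv
        · exact (adj_iot_na.1 h1).elim
        · exact absurd (adj_iot_nb.1 h2) hv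
    · rcases hna with ⟨a, -, hadj⟩ | hj
      · rw [SimpleGraph.adj_comm] at hadj
        exact absurd (adj_iot_na.mp hadj) id
      · rw [exists_fin3] at hj
        rcases hj with ⟨h0, -⟩ | ⟨-, h1⟩ | ⟨h2, -⟩
        · exact Or.inl h0
        · exact absurd h1 (orthoChain (n+1)).irrefl
        · exact Or.inr h2
    · rcases hnb with ⟨a, ha, hadj⟩ | hj
      · rw [SimpleGraph.adj_comm] at hadj
        rw [adj_iot_nb.1 hadj] at ha
        exact Or.inl ha
      · rw [exists_fin3] at hj
        rcases hj with ⟨-, h0⟩ | ⟨h1, -⟩ | ⟨-, h2⟩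
        · exact absurd h0 adj_nb_nc
        · exact Or.inr h1
        · exact absurd h2 (orthoChain (n+1)).irrefl
  · rintro ⟨hp, h02, hlast⟩
    constructor
    · intro v _
      rw [show (E n) (.inl v) = iot n v from rfl, dom_map]
      by_cases hv : v = .inl (Fin.last n)
      · subst hv
        refine Or.inr (exists_fin3.2 ?_)
        rcases h02 with h0 | h2
        · exact Or.inl ⟨h0, adj_iot_nc.2 rfl⟩
        · exact Or.inr (Or.inr ⟨h2, adj_iot_nb.2 rfl⟩)
      · obtain ⟨u, hu, hadj⟩ := hp v hv
        exact Or.inl ⟨u, hu, adj_iot.2 hadj⟩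
    · intro j hj
      fin_cases j
      · exact absurd rfl hj
      · show ∃ u ∈ (A.disjSum B).map (E n).toEmbedding, (orthoChain (n+1)).Adj (newV n 1) u
        rw [dom_map]
        refine Or.inr (exists_fin3.2 ?_)
        rcases h02 with h0 | h2
        · exact Or.inl ⟨h0, adj_na_nc⟩
        · exact Or.inr (Or.inr ⟨h2, adj_na_nb⟩)
      · show ∃ u ∈ (A.disjSum B).map (E n).toEmbedding, (orthoChain (n+1)).Adj (newV n 2) u
        rw [dom_map]
        rcases hlast with hA | hB
        · refine Or.inl ⟨_, hA, ?_⟩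
          rw [SimpleGraph.adj_comm]
          exact adj_iot_nb.2 rfl
        · refine Or.inr (exists_fin3.2 (Or.inr (Or.inl ⟨hB, ?_⟩)))
          rw [SimpleGraph.adj_comm]
          exact adj_na_nb

end TDAux
end AuxDev4
section AuxDev5
namespace TDAux
open SimpleGraph

set_option linter.unreachableTactic false
set_option linter.unusedTactic false

lemma pS_eq_sum (n : ℕ) [DecidablePred (pTDS n)] :
    pS n = ∑ D : Finset (Vtx n), if pTDS n D then (X : Polynomial ℤ) ^ D.card else 0 := by
  rw [pS]; congr!

lemma pT_eq_sum (n : ℕ)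
    [DecidablePred (fun D : Finset (Vtx n) => pTDS n D ∧ .inl (Fin.last n) ∈ D)] :
    pT n = ∑ D : Finset (Vtx n),
      if pTDS n D ∧ .inl (Fin.last n) ∈ D then (X : Polynomial ℤ) ^ D.card else 0 := by
  rw [pT]; congr!

lemma transfer_sum (n : ℕ) (F : Finset (Vtx (n+1)) → Polynomial ℤ) :
    ∑ D : Finset (Vtx (n+1)), F D =
      ∑ A : Finset (Vtx n), ∑ B : Finset (Fin 3), F ((A.disjSum B).map (E n).toEmbedding) := by
  classical
  rw [← sum_finset_sum (fun D' => F (D'.map (E n).toEmbedding))]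
  refine (Fintype.sum_equiv (E n).finsetCongr _ _ ?_).symm
  intro D'
  rw [Equiv.finsetCongr_apply]

lemma pS_succ (n : ℕ) :
    pS (n+1) = (X^3 + 2*X^2) * pS n + (X^2 + 2*X) * pT n := by
  classical
  rw [pS_eq_sum (n+1), transfer_sum n]
  have step : ∀ A : Finset (Vtx n),
      (∑ B : Finset (Fin 3),
        if pTDS (n+1) ((A.disjSum B).map (E n).toEmbedding)
          then (X : Polynomial ℤ) ^ ((A.disjSum B).map (E n).toEmbedding).card else 0)
      = (X^3 + 2*X^2) * (if pTDS n A then X ^ A.card else 0)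
        + (X^2 + 2*X) * (if pTDS n A ∧ .inl (Fin.last n) ∈ A then X ^ A.card else 0) := by
    intro A
    rw [sum_finset_fin3]
    simp only [pTDS_succ_iff, Finset.card_map, Finset.card_disjSum]
    by_cases hp : pTDS n A <;> by_cases hm : (.inl (Fin.last n) : Vtx n) ∈ A <;>
      simp [hp, hm] <;> ring
  rw [Finset.sum_congr rfl (fun A _ => step A)]
  rw [Finset.sum_add_distrib, ← Finset.mul_sum, ← Finset.mul_sum,
    pS_eq_sum n, pT_eq_sum n]

lemma pT_succ (n : ℕ) :
    pT (n+1) = (X^3 + X^2) * pS n + (X^2 + X) * pT n := by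
  classical
  rw [pT_eq_sum (n+1), transfer_sum n]
  have step : ∀ A : Finset (Vtx n),
      (∑ B : Finset (Fin 3),
        if pTDS (n+1) ((A.disjSum B).map (E n).toEmbedding)
            ∧ .inl (Fin.last (n+1)) ∈ (A.disjSum B).map (E n).toEmbedding
          then (X : Polynomial ℤ) ^ ((A.disjSum B).map (E n).toEmbedding).card else 0)
      = (X^3 + X^2) * (if pTDS n A then X ^ A.card else 0)
        + (X^2 + X) * (if pTDS n A ∧ .inl (Fin.last n) ∈ A then X ^ A.card else 0) := by
    intro A
    rw [sum_finset_fin3]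
    simp only [pTDS_succ_iff, nc_mem, Finset.card_map, Finset.card_disjSum]
    by_cases hp : pTDS n A <;> by_cases hm : (.inl (Fin.last n) : Vtx n) ∈ A <;>
      simp [hp, hm] <;> ring
  rw [Finset.sum_congr rfl (fun A _ => step A)]
  rw [Finset.sum_add_distrib, ← Finset.mul_sum, ← Finset.mul_sum,
    pS_eq_sum n, pT_eq_sum n]

/-! ### Base values -/

lemma pTDS_zero (D : Finset (Vtx 0)) : pTDS 0 D := by
  rintro (p | q | q) hv
  · refine absurd (congrArg Sum.inl (?_ : p = Fin.last 0)) hv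
    omega
  · exact q.elim0
  · exact q.elim0

lemma pS_zero : pS 0 = 1 + X := by
  classical
  rw [pS_eq_sum 0]
  have h : (univ : Finset (Finset (Vtx 0))) = {∅, {.inl 0}} := by decide
  rw [h, Finset.sum_insert (by decide), Finset.sum_singleton]
  rw [if_pos (pTDS_zero _), if_pos (pTDS_zero _)]
  rw [show ({.inl 0} : Finset (Vtx 0)).card = 1 by decide]
  simp

lemma pT_zero : pT 0 = X := by
  classical
  rw [pT_eq_sum 0]
  have h : (univ : Finset (Finset (Vtx 0))) = {∅, {.inl 0}} := by decide
  rw [h, Finset.sum_insert (by decide), Finset.sum_singleton]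
  rw [if_neg (by simp), if_pos ⟨pTDS_zero _, by decide⟩]
  rw [show ({.inl 0} : Finset (Vtx 0)).card = 1 by decide]
  ring

/-! ### `tdPoly` of the chain equals `pS` for `n ≥ 1` -/

lemma isTDS_iff_pTDS (n : ℕ) (D : Finset (Vtx (n+1))) :
    isTDS (orthoChain (n+1)) D ↔ pTDS (n+1) D := by
  constructor
  · exact fun h v _ => h v
  · intro h v
    by_cases hv : v = .inl (Fin.last (n+1))
    · subst hv
      obtain ⟨u, hu, hadj⟩ := h (.inr (.inr (Fin.last n)))
        (by simp [Fin.ext_iff])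
      refine ⟨u, hu, ?_⟩
      rcases u with p | q | q
      · rw [adj_bc] at hadj
        rw [adj_cc]
        simp [Fin.last] at hadj ⊢
        omega
      · rw [adj_ba] at hadj
        rw [adj_ca, hadj]
        simp [Fin.last]
      · rw [adj_bb] at hadj
        exact hadj.elim
    · exact h v hv
  
lemma tdPoly_orthoChain_eq_pS (n : ℕ) : tdPoly (orthoChain (n+1)) = pS (n+1) := by
  classical
  rw [tdPoly_eq (orthoChain (n+1)), pS_eq_sum (n+1)]
  exact Finset.sum_congr rfl fun D _ => by rw [isTDS_iff_pTDS]

end TDAux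
end AuxDev5
section AuxDev6
namespace TDAux
open SimpleGraph

set_option linter.unreachableTactic false
set_option linter.unusedTactic false

lemma tdPoly_iso {V W : Type*} [Fintype V] [Fintype W] [DecidableEq V] [DecidableEq W]
    (e : V ≃ W) (G : SimpleGraph V) (H : SimpleGraph W)
    (h : ∀ x y, G.Adj x y ↔ H.Adj (e x) (e y)) : tdPoly G = tdPoly H := by
  classical
  rw [tdPoly_eq G, tdPoly_eq H]
  refine Fintype.sum_equiv e.finsetCongr _ _ ?_
  intro D
  rw [Equiv.finsetCongr_apply, Finset.card_map]
  refine if_congr ?_ rfl rfl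
  constructor
  · intro hT w
    obtain ⟨v, rfl⟩ := e.surjective w
    obtain ⟨u, hu, ha⟩ := hT v
    exact ⟨e u, Finset.mem_map_of_mem _ hu, (h v u).1 ha⟩
  · intro hT v
    obtain ⟨u, hu, ha⟩ := hT (e v)
    obtain ⟨u', hu', rfl⟩ := Finset.mem_map.1 hu
    exact ⟨u', hu', (h v u').2 ha⟩

def eqv2 : Vtx 2 ≃ Option (Fin 2 × Fin 3) where
  toFun := Sum.elim (![some (0,0), none, some (1,0)])
    (Sum.elim ![some (0,2), some (1,1)] ![some (0,1), some (1,2)])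
  invFun o := o.elim (.inl 1)
    (fun p => ![![(.inl 0 : Vtx 2), .inr (.inr 0), .inr (.inl 0)],
      ![.inl 2, .inr (.inl 1), .inr (.inr 1)]] p.1 p.2)
  left_inv := by decide
  right_inv := by decide

lemma orthoChain_two_iso :
    tdPoly (orthoChain 2) = tdPoly (friendship4 2) := by
  refine tdPoly_iso eqv2 _ _ ?_
  intro x y
  simp only [orthoChain, friendship4, SimpleGraph.fromRel_adj, eqv2, Equiv.coe_fn_mk]
  revert x y
  set_option synthInstance.maxHeartbeats 2000000 in
  set_option synthInstance.maxSize 5000 in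
  set_option maxHeartbeats 2000000 in
  decide

end TDAux
end AuxDev6


theorem tdPoly_orthoChain_rec (n : ℕ) (hn : 3 ≤ n) :
    tdPoly (orthoChain n) =
      X * (X + 2) * ((X + 1) * tdPoly (orthoChain (n - 1)) - tdPoly (orthoChain2 (n - 2))) ∧
    tdPoly (orthoChain 1) = X ^ 4 + 4 * X ^ 3 + 4 * X ^ 2 ∧
    tdPoly (orthoChain 2) = tdPoly (friendship4 2) ∧
    (∀ k : ℕ, 1 ≤ k →
      tdPoly (orthoChain2 k) =
        X * ((X + 1) * tdPoly (orthoChain k) - tdPoly (orthoChain2 (k - 1)))) ∧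
    tdPoly (orthoChain2 0) = X ^ 3 + 2 * X ^ 2 := by
  open TDAux in
  refine ⟨?_, ?_, orthoChain_two_iso, ?_, ?_⟩
  · obtain ⟨m, rfl⟩ : ∃ m, n = m + 3 := ⟨n - 3, by omega⟩
    show tdPoly (orthoChain (m+3)) =
      X * (X + 2) * ((X + 1) * tdPoly (orthoChain (m+2)) - tdPoly (orthoChain2 (m+1)))
    rw [tdPoly_orthoChain_eq_pS (m+2), tdPoly_orthoChain_eq_pS (m+1),
      tdPoly_oc2 (m+1), pS_succ (m+2), pS_succ (m+1), pT_succ (m+1)]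
    ring
  · rw [tdPoly_orthoChain_eq_pS 0, pS_succ 0, pS_zero, pT_zero]
    ring
  · intro k hk
    obtain ⟨m, rfl⟩ : ∃ m, k = m + 1 := ⟨k - 1, by omega⟩
    show tdPoly (orthoChain2 (m+1)) =
      X * ((X + 1) * tdPoly (orthoChain (m+1)) - tdPoly (orthoChain2 m))
    rw [tdPoly_oc2 (m+1), tdPoly_oc2 m, tdPoly_orthoChain_eq_pS m,
      pS_succ m, pT_succ m]
    ring
  · rw [tdPoly_oc2 0, pS_zero, pT_zero]
    ring
end
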